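/- arXiv:2101.06604 — 8 statements merged into one kernel-verified Lean document; each statement's English description precedes it below -/
import Mathlib

section
/- Let G be a finite group, H a normal subgroup of prime index p, F a field, V an irreducible FH-module, and a ∈ G \ H. If the F-representation σ of H afforded by V is not G-stable (i.e., σ is not equivalent to its a-conjugate h ↦ σ(a h a⁻¹)), then the endomorphism algebra of the induced FG-module V↑G is isomorphic to Δ = End_{FH}(V). -/
/-!
Restricted to `H`, the induced module is `⊕_{i < p} aⁱ V`, and its `i`-th summand affords the
conjugate representation `h ↦ σ (a⁻ⁱ h aⁱ)`. These conjugates are irreducible, and for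
`0 < i < p` none of them is equivalent to `σ`: the inertia group `{g | σ ≅ σ^g}` lies between
`H` and `G` and misses `a`, so it equals `H` because `[G : H]` is prime. By Schur's lemma every
`G`-endomorphism `f` of `V↑G` therefore maps `V` into itself, and restricting `f` to `V` is an
algebra map `End_G(V↑G) → End_H(V)`. It is injective because `V` generates `V↑G` as a
`G`-module, and surjective because an `H`-endomorphism `φ` of `V` extends summand-wise by
`aⁱ v ↦ aⁱ φ(v)`; this extension commutes with `H` and with `a`, hence with `G`, since no
subgroup lies strictly between `H` and `G`.
-/

namespace Subgroup

variable {G : Type*} [Group G]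

theorem eq_or_eq_top_of_le_of_index_prime {H K : Subgroup G} (hH : H.index.Prime) (hHK : H ≤ K) :
    K = H ∨ K = ⊤ := by
  rcases hH.eq_one_or_self_of_dvd _ (index_dvd_of_le hHK) with hK | hK
  · exact .inr (index_eq_one.mp hK)
  · refine .inl (le_antisymm ?_ hHK)
    have := relIndex_mul_index hHK
    rw [hK, Nat.mul_eq_right hH.ne_zero] at this
    exact relIndex_eq_one.mp this

theorem pow_mem_iff_dvd_index {H : Subgroup G} [H.Normal] (hH : H.index.Prime) {a : G}
    (ha : a ∉ H) (k : ℕ) : a ^ k ∈ H ↔ H.index ∣ k := by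
  have horder : orderOf (a : G ⧸ H) = H.index := by
    rcases hH.eq_one_or_self_of_dvd _ (_root_.orderOf_dvd_natCard (a : G ⧸ H)) with h | h
    · exact absurd ((QuotientGroup.eq_one_iff a).mp (orderOf_eq_one_iff.mp h)) ha
    · exact h
  rw [← QuotientGroup.eq_one_iff, QuotientGroup.mk_pow, ← horder, orderOf_dvd_iff_pow_eq_one]

end Subgroup

theorem DirectSum.IsInternal.bijective_lsum {ι R M : Type*} {N : ι → Type*} [Fintype ι]
    [DecidableEq ι] [CommSemiring R] [AddCommMonoid M] [Module R M] [∀ i, AddCommMonoid (N i)]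
    [∀ i, Module R (N i)] {ψ : ∀ i, N i →ₗ[R] M} (hψ : ∀ i, Function.Injective (ψ i))
    (h : IsInternal fun i => LinearMap.range (ψ i)) :
    Function.Bijective (LinearMap.lsum R N R ψ) := by
  have : LinearMap.lsum R N R ψ = (coeLinearMap fun i => LinearMap.range (ψ i)) ∘ₗ
      ((LinearEquiv.piCongrRight fun i => LinearEquiv.ofInjective (ψ i) (hψ i)).trans
        (linearEquivFunOnFintype R ι _).symm).toLinearMap := by
    refine LinearMap.pi_ext fun i x => ?_
    have : (LinearEquiv.piCongrRight fun i => LinearEquiv.ofInjective (ψ i) (hψ i)) (Pi.single i x)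
        = Pi.single i (LinearEquiv.ofInjective (ψ i) (hψ i) x) :=
      funext fun j => Pi.apply_single (fun j => LinearEquiv.ofInjective (ψ j) (hψ j))
        (fun j => map_zero _) i x j
    rw [LinearMap.lsum_piSingle, LinearMap.comp_apply, LinearEquiv.coe_coe, LinearEquiv.trans_apply,
      this, linearEquivFunOnFintype_symm_single, lof_eq_of, coeLinearMap_of]
    rfl
  rw [this, LinearMap.coe_comp, LinearEquiv.coe_coe]
  exact h.comp (LinearEquiv.bijective _)

namespace Representation

section Precomp

variable {k M N V V' : Type*} [CommSemiring k] [Monoid M] [Monoid N] [AddCommMonoid V]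
  [Module k V] [AddCommMonoid V'] [Module k V']

def Equiv.precomp {ρ : Representation k M V} {ρ' : Representation k M V'} (α : ρ.Equiv ρ')
    (f : N →* M) : Representation.Equiv (ρ.comp f) (ρ'.comp f) :=
  .mk α.toLinearEquiv fun n => α.isIntertwining' (f n)

def subrepresentationCompOrderIso (ρ : Representation k M V) (e : N ≃* M) :
    Subrepresentation (ρ.comp e.toMonoidHom) ≃o Subrepresentation ρ where
  toFun U := ⟨U.toSubmodule, fun m v hv => by simpa using U.apply_mem_toSubmodule (e.symm m) hv⟩
  invFun U := ⟨U.toSubmodule, fun n _ hv => U.apply_mem_toSubmodule (e n) hv⟩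
  left_inv _ := rfl
  right_inv _ := rfl
  map_rel_iff' := Iff.rfl

end Precomp

theorem isIrreducible_of_forall_eq_bot_or_eq_top {k G V : Type*} [Field k] [Monoid G]
    [AddCommGroup V] [Module k V] [Nontrivial V] {ρ : Representation k G V}
    (h : ∀ U : Submodule k V, (∀ g, ∀ v ∈ U, ρ g v ∈ U) → U = ⊥ ∨ U = ⊤) : ρ.IsIrreducible where
  exists_pair_ne := ⟨⊥, ⊤, fun h => bot_ne_top (congrArg Subrepresentation.toSubmodule h)⟩
  eq_bot_or_eq_top U := (h U.toSubmodule U.apply_mem_toSubmodule).imp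
    (fun hU => Subrepresentation.toSubmodule_injective hU)
    (fun hU => Subrepresentation.toSubmodule_injective hU)

section Commute

variable {k G V : Type*} [CommSemiring k] [Group G] [AddCommMonoid V] [Module k V]
  (ρ : Representation k G V)

def commuteSubgroup (f : Module.End k V) : Subgroup G where
  carrier := {g | Commute (ρ g) f}
  one_mem' := by simp [Commute.one_left]
  mul_mem' {g₁ g₂} h₁ h₂ := by simpa only [Set.mem_ofPred_eq, map_mul] using h₁.mul_left h₂
  inv_mem' {g} hg := by
    simpa only [Set.mem_ofPred_eq, ← asGroupHom_apply, map_inv] using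
      Commute.units_inv_left (u := ρ.asGroupHom g) hg

theorem mem_commuteSubgroup {f : Module.End k V} {g : G} :
    g ∈ ρ.commuteSubgroup f ↔ Commute (ρ g) f :=
  Iff.rfl

def centralizerAlgEquiv : Subalgebra.centralizer k (Set.range ρ) ≃ₐ[k] ρ.IntertwiningMap ρ where
  toFun f := ⟨f, fun g => ((Subalgebra.mem_centralizer_iff k).mp f.2 _ ⟨g, rfl⟩).symm⟩
  invFun φ := ⟨φ.toLinearMap, (Subalgebra.mem_centralizer_iff k).mpr <| by
    rintro _ ⟨g, rfl⟩
    exact (φ.isIntertwining' g).symm⟩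
  left_inv _ := rfl
  right_inv _ := rfl
  map_mul' _ _ := rfl
  map_add' _ _ := rfl
  commutes' _ := rfl

end Commute

section Conj

variable {k G V : Type*} [CommSemiring k] [Group G] [AddCommMonoid V] [Module k V]
  {H : Subgroup G} [H.Normal] (σ : Representation k H V)

def conj (g : G) : Representation k H V :=
  σ.comp (MulAut.conjNormal g).toMonoidHom

theorem conj_apply (g : G) (h : H) : σ.conj g h = σ (MulAut.conjNormal g h) := rfl

theorem conj_one : σ.conj 1 = σ := by
  ext h : 1
  rw [conj_apply, map_one]
  rfl

theorem conj_mul (g₁ g₂ : G) : σ.conj (g₁ * g₂) = (σ.conj g₁).conj g₂ := by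
  ext h : 1
  rw [conj_apply, conj_apply, conj_apply, map_mul]
  rfl

def inertia : Subgroup G where
  carrier := {g | Nonempty (σ.Equiv (σ.conj g))}
  one_mem' := by
    rw [Set.mem_ofPred_eq, conj_one]
    exact ⟨.refl σ⟩
  mul_mem' := by
    rintro g₁ g₂ ⟨α₁⟩ ⟨α₂⟩
    rw [Set.mem_ofPred_eq, conj_mul]
    exact ⟨α₂.trans (α₁.precomp _)⟩
  inv_mem' := by
    rintro g ⟨α⟩
    have e : (σ.conj g).conj g⁻¹ = σ := by rw [← conj_mul, mul_inv_cancel, conj_one]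
    have β : Representation.Equiv ((σ.conj g).conj g⁻¹) (σ.conj g⁻¹) := α.symm.precomp _
    rw [e] at β
    exact ⟨β⟩

theorem le_inertia : H ≤ σ.inertia := fun h₀ hh₀ =>
  ⟨.mk (LinearMap.GeneralLinearGroup.toLinearEquiv (σ.asGroupHom ⟨h₀, hh₀⟩)) fun h => by
    ext v
    simp only [LinearMap.comp_apply, LinearEquiv.coe_coe,
      LinearMap.GeneralLinearGroup.coe_toLinearEquiv, asGroupHom_apply, conj_apply]
    rw [← Module.End.mul_apply, ← Module.End.mul_apply, ← map_mul, ← map_mul]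
    congr 2
    ext
    simp⟩

theorem inertia_eq_of_index_prime (hH : H.index.Prime) {a : G} (ha : a ∉ σ.inertia) :
    σ.inertia = H :=
  (Subgroup.eq_or_eq_top_of_le_of_index_prime hH σ.le_inertia).resolve_right fun h =>
    ha (h ▸ Subgroup.mem_top a)

theorem pow_mem_inertia_iff (hH : H.index.Prime) {a : G} (ha : a ∉ σ.inertia) (n : ℕ) :
    a ^ n ∈ σ.inertia ↔ H.index ∣ n := by
  have hσ := σ.inertia_eq_of_index_prime hH ha
  rw [hσ] at ha ⊢
  exact Subgroup.pow_mem_iff_dvd_index hH ha n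

end Conj

instance isIrreducible_conj {k G V : Type*} [Field k] [Group G] [AddCommGroup V] [Module k V]
    {H : Subgroup G} [H.Normal] (σ : Representation k H V) [σ.IsIrreducible] (g : G) :
    (σ.conj g).IsIrreducible :=
  (subrepresentationCompOrderIso σ (MulAut.conjNormal g)).isSimpleOrder_iff.mpr ‹_›

variable {F G V W : Type*} [Field F] [Group G] [AddCommGroup V] [Module F V] [AddCommGroup W]
  [Module F W] {H : Subgroup G}

/-- `W` is the induced module `V↑G`, presented through the embedding `ι` of `V` and the
transversal `1, a, …, a^([G:H]-1)` of `H`. -/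
structure IsInducedAlongPowers (σ : Representation F H V) (τ : Representation F G W) (a : G)
    (ι : V →ₗ[F] W) : Prop where
  injective : Function.Injective ι
  intertwines : ∀ h : H, τ h ∘ₗ ι = ι ∘ₗ σ h
  isInternal : DirectSum.IsInternal fun i : Fin H.index =>
    Submodule.map (τ (a ^ (i : ℕ))) (LinearMap.range ι)

namespace IsInducedAlongPowers

variable {σ : Representation F H V} {τ : Representation F G W} {a : G} {ι : V →ₗ[F] W}

theorem intertwines_apply (hW : IsInducedAlongPowers σ τ a ι) (h : H) (v : V) :
    τ h (ι v) = ι (σ h v) :=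
  LinearMap.congr_fun (hW.intertwines h) v

theorem translate_intertwines_apply [H.Normal] (hW : IsInducedAlongPowers σ τ a ι) (g : G)
    (h : H) (v : V) : τ h (τ g (ι v)) = τ g (ι (σ.conj g⁻¹ h v)) := by
  rw [conj_apply, ← hW.intertwines_apply, ← Module.End.mul_apply, ← Module.End.mul_apply,
    ← map_mul, ← map_mul, MulAut.conjNormal_apply, inv_inv]
  group

noncomputable def piEquiv (hW : IsInducedAlongPowers σ τ a ι) : (Fin H.index → V) ≃ₗ[F] W :=
  LinearEquiv.ofBijective
    (LinearMap.lsum F (fun _ => V) F fun i : Fin H.index => τ (a ^ (i : ℕ)) ∘ₗ ι)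
    (DirectSum.IsInternal.bijective_lsum
      (ψ := fun i : Fin H.index => τ (a ^ (i : ℕ)) ∘ₗ ι)
      (fun _ => (τ.apply_bijective _).injective.comp hW.injective)
      (by simpa only [LinearMap.range_comp] using hW.isInternal))

theorem piEquiv_apply (hW : IsInducedAlongPowers σ τ a ι) (c : Fin H.index → V) :
    hW.piEquiv c = ∑ i : Fin H.index, τ (a ^ (i : ℕ)) (ι (c i)) := by
  simp [piEquiv]

theorem piEquiv_single (hW : IsInducedAlongPowers σ τ a ι) (i : Fin H.index) (v : V) :
    hW.piEquiv (Pi.single i v) = τ (a ^ (i : ℕ)) (ι v) :=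
  LinearMap.lsum_piSingle F (fun _ => V) F _ i v

theorem linearMap_ext {M : Type*} [AddCommGroup M] [Module F M]
    (hW : IsInducedAlongPowers σ τ a ι) {f₁ f₂ : W →ₗ[F] M}
    (h : ∀ (i : Fin H.index) (v : V), f₁ (τ (a ^ (i : ℕ)) (ι v)) = f₂ (τ (a ^ (i : ℕ)) (ι v))) :
    f₁ = f₂ := by
  suffices f₁ ∘ₗ hW.piEquiv.toLinearMap = f₂ ∘ₗ hW.piEquiv.toLinearMap from
    (hW.piEquiv.eq_comp_toLinearMap_iff f₁ f₂).mp this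
  refine LinearMap.pi_ext fun i v => ?_
  simpa [piEquiv_single] using h i v

theorem piEquiv_symm_intertwines [H.Normal] (hW : IsInducedAlongPowers σ τ a ι) (h : H)
    (w : W) (j : Fin H.index) :
    hW.piEquiv.symm (τ h w) j = σ.conj (a ^ (j : ℕ))⁻¹ h (hW.piEquiv.symm w j) := by
  obtain ⟨c, rfl⟩ := hW.piEquiv.surjective w
  have : τ h (hW.piEquiv c) = hW.piEquiv fun i => σ.conj (a ^ (i : ℕ))⁻¹ h (c i) := by
    simp only [piEquiv_apply, map_sum, hW.translate_intertwines_apply]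
  rw [this, LinearEquiv.symm_apply_apply, LinearEquiv.symm_apply_apply]

theorem piEquiv_symm_apply_eq_zero [H.Normal] [σ.IsIrreducible]
    (hW : IsInducedAlongPowers σ τ a ι) (hH : H.index.Prime) (ha : a ∉ σ.inertia)
    (f : τ.IntertwiningMap τ) (v : V) {j : Fin H.index} (hj : (j : ℕ) ≠ 0) :
    hW.piEquiv.symm (f (ι v)) j = 0 := by
  have : IsEmpty (σ.Equiv (σ.conj (a ^ (j : ℕ))⁻¹)) := ⟨fun α => hj <| Nat.eq_zero_of_dvd_of_lt
    ((σ.pow_mem_inertia_iff hH ha _).mp (inv_mem_iff.mp ⟨α⟩)) j.isLt⟩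
  let φ : σ.IntertwiningMap (σ.conj (a ^ (j : ℕ))⁻¹) :=
    (LinearMap.proj j ∘ₗ hW.piEquiv.symm.toLinearMap ∘ₗ f.toLinearMap ∘ₗ ι
      ).intertwiningMap_of_isIntertwiningMap _ _ fun h v => by
        simp [← hW.intertwines_apply, f.isIntertwining, hW.piEquiv_symm_intertwines]
  -- Schur's lemma, as the `Subsingleton` instance on intertwining maps into an irreducible target
  exact LinearMap.congr_fun (congrArg IntertwiningMap.toLinearMap (Subsingleton.elim φ 0)) v

theorem apply_mem_range [H.Normal] [σ.IsIrreducible] (hW : IsInducedAlongPowers σ τ a ι)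
    (hH : H.index.Prime) (ha : a ∉ σ.inertia) (f : τ.IntertwiningMap τ) (v : V) :
    f (ι v) ∈ LinearMap.range ι := by
  refine ⟨hW.piEquiv.symm (f (ι v)) ⟨0, hH.pos⟩, ?_⟩
  conv_rhs => rw [← hW.piEquiv.apply_symm_apply (f (ι v)), piEquiv_apply]
  rw [Finset.sum_eq_single_of_mem (⟨0, hH.pos⟩ : Fin H.index) (Finset.mem_univ _) fun j _ hj =>
    by rw [hW.piEquiv_symm_apply_eq_zero hH ha f v (fun h => hj (Fin.ext h)), map_zero, map_zero]]
  simp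

section Extend

variable (hW : IsInducedAlongPowers σ τ a ι) (φ : σ.IntertwiningMap σ)

noncomputable def extendLinearMap : Module.End F W :=
  hW.piEquiv.toLinearMap ∘ₗ LinearMap.piMap (fun _ => φ.toLinearMap) ∘ₗ
    hW.piEquiv.symm.toLinearMap

theorem extendLinearMap_apply_fin (i : Fin H.index) (v : V) :
    hW.extendLinearMap φ (τ (a ^ (i : ℕ)) (ι v)) = τ (a ^ (i : ℕ)) (ι (φ v)) := by
  rw [← hW.piEquiv_single, ← hW.piEquiv_single]
  simp only [extendLinearMap, LinearMap.coe_comp, LinearEquiv.coe_coe, Function.comp_apply,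
    LinearEquiv.symm_apply_apply]
  congr 1
  exact funext (Pi.apply_single (fun _ => φ) (fun _ => map_zero φ) i v)

theorem extendLinearMap_apply [H.Normal] [H.FiniteIndex] (k : ℕ) (v : V) :
    hW.extendLinearMap φ (τ (a ^ k) (ι v)) = τ (a ^ k) (ι (φ v)) := by
  have hH : 0 < H.index := Nat.pos_of_ne_zero Subgroup.FiniteIndex.index_ne_zero
  let h₀ : H := ⟨(a ^ H.index) ^ (k / H.index), pow_mem (H.pow_index_mem a) _⟩
  have hk : a ^ k = a ^ (k % H.index) * h₀ := by
    change _ = _ * (a ^ H.index) ^ (k / H.index)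
    rw [← pow_mul, ← pow_add, Nat.mod_add_div]
  have := hW.extendLinearMap_apply_fin φ ⟨k % H.index, Nat.mod_lt _ hH⟩ (σ h₀ v)
  rw [hk, map_mul, Module.End.mul_apply, Module.End.mul_apply, hW.intertwines_apply, this,
    φ.isIntertwining, hW.intertwines_apply]

theorem commute_extendLinearMap [H.Normal] (hH : H.index.Prime) (ha : a ∉ H) (g : G) :
    Commute (τ g) (hW.extendLinearMap φ) := by
  have : H.FiniteIndex := ⟨hH.ne_zero⟩
  have hHle : H ≤ τ.commuteSubgroup (hW.extendLinearMap φ) := fun h hh => hW.linearMap_ext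
    fun i v => by
      rw [Module.End.mul_apply, Module.End.mul_apply, hW.extendLinearMap_apply,
        hW.translate_intertwines_apply _ ⟨h, hh⟩, hW.translate_intertwines_apply _ ⟨h, hh⟩,
        hW.extendLinearMap_apply, conj_apply, φ.isIntertwining]
  have haMem : a ∈ τ.commuteSubgroup (hW.extendLinearMap φ) := hW.linearMap_ext fun i v => by
    simp only [Module.End.mul_apply, ← Module.End.mul_apply (τ a), ← map_mul, ← pow_succ',
      extendLinearMap_apply]
  obtain h | h := Subgroup.eq_or_eq_top_of_le_of_index_prime hH hHle
  · exact absurd (h ▸ haMem) ha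
  · rw [← mem_commuteSubgroup, h]
    exact Subgroup.mem_top g

noncomputable def extend [H.Normal] (hH : H.index.Prime) (ha : a ∉ H) : τ.IntertwiningMap τ where
  toLinearMap := hW.extendLinearMap φ
  isIntertwining' g := (hW.commute_extendLinearMap φ hH ha g).eq.symm

end Extend

section Restrict

variable [H.Normal] [σ.IsIrreducible] (hW : IsInducedAlongPowers σ τ a ι) (hH : H.index.Prime)
  (ha : a ∉ σ.inertia)

noncomputable def restrict (f : τ.IntertwiningMap τ) : σ.IntertwiningMap σ :=
  ((LinearEquiv.ofInjective ι hW.injective).symm.toLinearMap ∘ₗ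
    (f.toLinearMap ∘ₗ ι).codRestrict _ (hW.apply_mem_range hH ha f)
    ).intertwiningMap_of_isIntertwiningMap _ _ fun h v => hW.injective <| by
      simp [← hW.intertwines_apply, f.isIntertwining]

theorem apply_restrict (f : τ.IntertwiningMap τ) (v : V) :
    ι (hW.restrict hH ha f v) = f (ι v) := by
  simp [restrict]

noncomputable def restrictAlgHom : τ.IntertwiningMap τ →ₐ[F] σ.IntertwiningMap σ where
  toFun := hW.restrict hH ha
  map_one' := by ext v; exact hW.injective (by simp [apply_restrict])
  map_mul' f g := by ext v; exact hW.injective (by simp [apply_restrict])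
  map_zero' := by ext v; exact hW.injective (by simp [apply_restrict])
  map_add' f g := by ext v; exact hW.injective (by simp [apply_restrict])
  commutes' r := by ext v; exact hW.injective (by simp [apply_restrict])

theorem restrictAlgHom_injective : Function.Injective (hW.restrictAlgHom hH ha) :=
  fun f₁ f₂ h => IntertwiningMap.ext <| hW.linearMap_ext fun i v => by
    have hv : ι (hW.restrict hH ha f₁ v) = ι (hW.restrict hH ha f₂ v) :=
      congrArg (fun φ : σ.IntertwiningMap σ => ι (φ v)) h
    rw [hW.apply_restrict, hW.apply_restrict] at hv
    simp only [IntertwiningMap.toLinearMap_apply, f₁.isIntertwining, f₂.isIntertwining, hv]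

theorem restrict_extend (φ : σ.IntertwiningMap σ) :
    hW.restrict hH ha (hW.extend φ hH fun h => ha (σ.le_inertia h)) = φ := by
  have : H.FiniteIndex := ⟨hH.ne_zero⟩
  ext v
  refine hW.injective ?_
  rw [IntertwiningMap.toLinearMap_apply, hW.apply_restrict]
  change hW.extendLinearMap φ (ι v) = ι (φ v)
  simpa using hW.extendLinearMap_apply φ 0 v

noncomputable def intertwiningMapAlgEquiv : τ.IntertwiningMap τ ≃ₐ[F] σ.IntertwiningMap σ :=
  AlgEquiv.ofBijective (hW.restrictAlgHom hH ha)
    ⟨hW.restrictAlgHom_injective hH ha, fun φ => ⟨_, hW.restrict_extend hH ha φ⟩⟩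

end Restrict

end IsInducedAlongPowers

end Representation

theorem stmt0_general {F : Type*} [Field F] {G : Type*} [Group G]
    {V W : Type*} [AddCommGroup V] [Module F V] [AddCommGroup W] [Module F W]
    (H : Subgroup G) (hN : H.Normal) (p : ℕ) (hp : p.Prime) (hidx : H.index = p)
    (σ : Representation F H V) (τ : Representation F G W)
    [Nontrivial V]
    (hirr : ∀ U : Submodule F V, (∀ h : H, ∀ v ∈ U, σ h v ∈ U) → U = ⊥ ∨ U = ⊤)
    (a : G)
    (ι : V →ₗ[F] W) (hinj : Function.Injective ι)
    (hequiv : ∀ h : H, τ h ∘ₗ ι = ι ∘ₗ σ h)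
    (hint : DirectSum.IsInternal fun i : Fin p =>
      Submodule.map (τ (a ^ (i : ℕ))) (LinearMap.range ι))
    (hns : ¬ ∃ α : V ≃ₗ[F] V, ∀ h : H,
      σ ⟨a * ↑h * a⁻¹, hN.conj_mem ↑h h.2 a⟩ ∘ₗ (α : V →ₗ[F] V) =
        (α : V →ₗ[F] V) ∘ₗ σ h) :
    Nonempty
      ((Subalgebra.centralizer F (Set.range fun g : G => (τ g : Module.End F W))) ≃ₐ[F]
        (Subalgebra.centralizer F (Set.range fun h : H => (σ h : Module.End F V)))) := by
  subst hidx
  have hW : σ.IsInducedAlongPowers τ a ι := ⟨hinj, hequiv, hint⟩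
  have : σ.IsIrreducible := Representation.isIrreducible_of_forall_eq_bot_or_eq_top hirr
  have ha : a ∉ σ.inertia := fun ⟨α⟩ =>
    hns ⟨α.toLinearEquiv, fun h => (α.isIntertwining' h).symm⟩
  exact ⟨(Representation.centralizerAlgEquiv τ).trans
    ((hW.intertwiningMapAlgEquiv hp ha).trans (Representation.centralizerAlgEquiv σ).symm)⟩

/-- Non-stable case: if `H ⊴ G` has prime index `p`, `V` is an irreducible `FH`-module
with representation `σ`, `a ∈ G \ H`, the induced `FG`-module `V↑G` is modeled by `W`
(via an injective `H`-equivariant `ι : V → W` with `W = ⊕_{i<p} τ(a)^i ι(V)`), and `σ`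
is not equivalent to its `a`-conjugate, then `End_{FG}(V↑G) ≅ End_{FH}(V) = Δ`. -/
theorem stmt0 {F : Type*} [Field F] {G : Type*} [Group G] [Finite G]
    {V W : Type*} [AddCommGroup V] [Module F V] [AddCommGroup W] [Module F W]
    (H : Subgroup G) (hN : H.Normal) (p : ℕ) (hp : p.Prime) (hidx : H.index = p)
    (σ : Representation F H V) (τ : Representation F G W)
    [Nontrivial V]
    (hirr : ∀ U : Submodule F V, (∀ h : H, ∀ v ∈ U, σ h v ∈ U) → U = ⊥ ∨ U = ⊤)
    (a : G) (ha : a ∉ H)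
    (ι : V →ₗ[F] W) (hinj : Function.Injective ι)
    (hequiv : ∀ h : H, τ h ∘ₗ ι = ι ∘ₗ σ h)
    (hint : DirectSum.IsInternal fun i : Fin p =>
      Submodule.map (τ (a ^ (i : ℕ))) (LinearMap.range ι))
    (hns : ¬ ∃ α : V ≃ₗ[F] V, ∀ h : H,
      σ ⟨a * ↑h * a⁻¹, hN.conj_mem ↑h h.2 a⟩ ∘ₗ (α : V →ₗ[F] V) =
        (α : V →ₗ[F] V) ∘ₗ σ h) :
    Nonempty
      ((Subalgebra.centralizer F (Set.range fun g : G => (τ g : Module.End F W))) ≃ₐ[F]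
        (Subalgebra.centralizer F (Set.range fun h : H => (σ h : Module.End F V)))) :=
  stmt0_general H hN p hp hidx σ τ hirr a ι hinj hequiv hint hns
end

section
/- Let G be a finite group, H a normal subgroup, a ∈ G, V an FH-module, and α ∈ Aut_F(V) satisfying σ(a h a⁻¹) = α σ(h) α⁻¹ for all h ∈ H, where σ is the representation afforded by V. Then for each i ∈ ℤ, the map v ↦ v α^{-i} a^i is an FH-module isomorphism from V onto the FH-submodule V a^i of the restriction of V↑G to H. -/
/-!
The pairs `(g, β)` for which `β` intertwines `σ` with its `g`-conjugate form a subgroup of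
`G × Aut_F(V)`. Since `(a, α)` is such a pair, so is `(a⁻ⁱ, α⁻ⁱ)`, and writing
`h aⁱ = aⁱ (a⁻ⁱ h aⁱ)` shows that `τ(aⁱ) ∘ ι ∘ α⁻ⁱ` commutes with the action of `H`.
-/

namespace Representation

variable {k G V W : Type*} [CommSemiring k] [Group G] [AddCommMonoid V] [Module k V]
  [AddCommMonoid W] [Module k W] {H : Subgroup G} [H.Normal]

def conjIntertwiners (σ : Representation k H V) : Subgroup (G × (V ≃ₗ[k] V)) where
  carrier := {p | ∀ h v, σ (MulAut.conjNormal p.1 h) (p.2 v) = p.2 (σ h v)}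
  one_mem' h v := by simp
  mul_mem' {p q} hp hq h v := by
    simp only [Set.mem_ofPred_eq, Prod.fst_mul, Prod.snd_mul, map_mul, MulAut.mul_apply,
      LinearEquiv.mul_apply] at *
    rw [hp, hq]
  inv_mem' {p} hp h v := by
    simp only [Set.mem_ofPred_eq, Prod.fst_inv, Prod.snd_inv, map_inv] at *
    apply p.2.injective
    rw [← hp, MulAut.inv_apply, MulEquiv.apply_symm_apply]
    simp only [LinearEquiv.coe_inv, LinearEquiv.apply_symm_apply]

theorem equivariant_inv_comp_of_mem_conjIntertwiners {σ : Representation k H V}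
    {τ : Representation k G W} {ι : V →ₗ[k] W} (hι : ∀ (h : H) v, τ h (ι v) = ι (σ h v))
    {g : G} {β : V ≃ₗ[k] V} (hgβ : (g, β) ∈ σ.conjIntertwiners) (h : H) (v : V) :
    τ h (τ g⁻¹ (ι (β v))) = τ g⁻¹ (ι (β (σ h v))) := by
  have hconj : (h : G) * g⁻¹ = g⁻¹ * MulAut.conjNormal g h := by simp [mul_assoc]
  rw [← Module.End.mul_apply, ← map_mul, hconj, map_mul, Module.End.mul_apply, hι, hgβ]

end Representation

open LinearMap

/-- If `α ∈ Aut_F(V)` intertwines `σ` with its `a`-conjugate, then for each `i ∈ ℤ` the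
map `τ(a^i) ∘ ι ∘ α^{-i}` is an `FH`-module isomorphism from `V` onto the `FH`-submodule
`V a^i = τ(a^i)(ι(V))` of the restriction of the induced module `W = V↑G` to `H`. -/
theorem stmt1 {F : Type*} [Field F] {G : Type*} [Group G]
    {V W : Type*} [AddCommGroup V] [Module F V] [AddCommGroup W] [Module F W]
    (H : Subgroup G) (hN : H.Normal)
    (σ : Representation F H V) (τ : Representation F G W)
    (a : G) (α : V ≃ₗ[F] V)
    (hα : ∀ h : H, σ ⟨a * ↑h * a⁻¹, hN.conj_mem ↑h h.2 a⟩ ∘ₗ (α : V →ₗ[F] V) =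
      (α : V →ₗ[F] V) ∘ₗ σ h)
    (ι : V →ₗ[F] W) (hinj : Function.Injective ι)
    (hequiv : ∀ h : H, τ h ∘ₗ ι = ι ∘ₗ σ h) (i : ℤ) :
    Function.Injective (τ (a ^ i) ∘ₗ ι ∘ₗ ((α ^ (-i) : V ≃ₗ[F] V) : V →ₗ[F] V)) ∧
    (∀ h : H, τ h ∘ₗ (τ (a ^ i) ∘ₗ ι ∘ₗ ((α ^ (-i) : V ≃ₗ[F] V) : V →ₗ[F] V)) =
      (τ (a ^ i) ∘ₗ ι ∘ₗ ((α ^ (-i) : V ≃ₗ[F] V) : V →ₗ[F] V)) ∘ₗ σ h) ∧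
    LinearMap.range (τ (a ^ i) ∘ₗ ι ∘ₗ ((α ^ (-i) : V ≃ₗ[F] V) : V →ₗ[F] V)) =
      Submodule.map (τ (a ^ i)) (LinearMap.range ι) := by
  have hmem : (a, α) ∈ σ.conjIntertwiners := fun h v => LinearMap.congr_fun (hα h) v
  have hpow : (a ^ (-i), α ^ (-i)) ∈ σ.conjIntertwiners :=
    σ.conjIntertwiners.zpow_mem hmem (-i)
  refine ⟨(τ.apply_bijective _).1.comp (hinj.comp (α ^ (-i)).injective), fun h => ?_, ?_⟩
  · ext v
    simpa using σ.equivariant_inv_comp_of_mem_conjIntertwiners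
      (fun h v => LinearMap.congr_fun (hequiv h) v) hpow h v
  · rw [range_comp, range_comp, LinearEquiv.range, Submodule.map_top]
end

section
/- Let [G:H] = p and α ∈ Aut_F(V) satisfy σ(a h a⁻¹) = α σ(h) α⁻¹ for all h ∈ H, where a ∈ G \ H. Define λ = α^{-p} σ(a^p). Then λ lies in Δ^× = End_{FH}(V)^×, α(λ) = λ, and for all δ ∈ Δ one has α^p(δ) = λ δ λ⁻¹. -/
open LinearMap

/-!
Both `α ^ p` and `σ (a ^ p)` intertwine `σ` with its conjugate by `a ^ p`, the first by iterating
the defining property of `α`, the second because `a ^ p ∈ H`. Hence `λ = α⁻ᵖ σ(aᵖ)` commutes with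
`σ(H)`. Since `a` commutes with `a ^ p`, `α` commutes with `σ(aᵖ)`, which gives `α⁻¹ λ α = λ`; and
`α⁻ᵖ δ αᵖ λ = α⁻ᵖ δ σ(aᵖ) = λ δ` for every `δ` commuting with `σ(aᵖ)`.
-/

theorem SemiconjBy.pow_conjNormal {G M : Type*} [Group G] [Monoid M] {H : Subgroup G} [H.Normal]
    {ρ : H → M} {u : M} {a : G}
    (h : ∀ x : H, SemiconjBy u (ρ x) (ρ (MulAut.conjNormal a x))) (n : ℕ) (x : H) :
    SemiconjBy (u ^ n) (ρ x) (ρ (MulAut.conjNormal (a ^ n) x)) := by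
  induction n generalizing x with
  | zero => simp
  | succ n ih =>
    rw [pow_succ, pow_succ, map_mul, MulAut.mul_apply]
    exact (ih _).mul_left (h x)

theorem MonoidHom.semiconjBy_conjNormal {G M : Type*} [Group G] [Monoid M] {H : Subgroup G}
    [H.Normal] (ρ : H →* M) (g x : H) :
    SemiconjBy (ρ g) (ρ x) (ρ (MulAut.conjNormal (g : G) x)) := by
  have hconj : MulAut.conjNormal (g : G) x = g * x * g⁻¹ := Subtype.ext (by simp)
  rw [SemiconjBy, hconj, ← map_mul, ← map_mul, inv_mul_cancel_right]

theorem Units.commute_inv_mul_of_semiconjBy {M : Type*} [Monoid M] {v : Mˣ} {s x y : M}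
    (hv : SemiconjBy ↑v x y) (hs : SemiconjBy s x y) : Commute (↑v⁻¹ * s) x :=
  hv.units_inv_symm_left.mul_left hs

theorem stmt3_general {F : Type*} [Field F] {G : Type*} [Group G]
    {V : Type*} [AddCommGroup V] [Module F V]
    (H : Subgroup G) (hN : H.Normal) (p : ℕ)
    (σ : Representation F H V) (a : G) (hap : a ^ p ∈ H)
    (α : V ≃ₗ[F] V)
    (hα : ∀ h : H, σ ⟨a * ↑h * a⁻¹, hN.conj_mem ↑h h.2 a⟩ ∘ₗ (α : V →ₗ[F] V) =
      (α : V →ₗ[F] V) ∘ₗ σ h) :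
    (((α.symm : V →ₗ[F] V) ^ p) ∘ₗ σ ⟨a ^ p, hap⟩ ∈
        {δ : Module.End F V | ∀ h : H, Commute δ (σ h)} ∧
      IsUnit (((α.symm : V →ₗ[F] V) ^ p) ∘ₗ σ ⟨a ^ p, hap⟩)) ∧
    ((α.symm : V →ₗ[F] V) ∘ₗ (((α.symm : V →ₗ[F] V) ^ p) ∘ₗ σ ⟨a ^ p, hap⟩) ∘ₗ
        (α : V →ₗ[F] V) = ((α.symm : V →ₗ[F] V) ^ p) ∘ₗ σ ⟨a ^ p, hap⟩) ∧
    (∀ δ : Module.End F V, (∀ h : H, Commute δ (σ h)) →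
      (((α.symm : V →ₗ[F] V) ^ p) ∘ₗ δ ∘ₗ ((α : V →ₗ[F] V) ^ p)) ∘ₗ
          (((α.symm : V →ₗ[F] V) ^ p) ∘ₗ σ ⟨a ^ p, hap⟩) =
        (((α.symm : V →ₗ[F] V) ^ p) ∘ₗ σ ⟨a ^ p, hap⟩) ∘ₗ δ) := by
  have := hN
  set u := GeneralLinearGroup.ofLinearEquiv α
  set s := σ ⟨a ^ p, hap⟩
  have hu (h : H) : SemiconjBy (u : Module.End F V) (σ h) (σ (MulAut.conjNormal a h)) := by
    have hconj : MulAut.conjNormal a h = ⟨a * ↑h * a⁻¹, hN.conj_mem ↑h h.2 a⟩ :=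
      Subtype.ext (MulAut.conjNormal_apply a h)
    rw [SemiconjBy, hconj, Module.End.mul_eq_comp, Module.End.mul_eq_comp]
    exact (hα h).symm
  have hus : Commute (u : Module.End F V) s := by
    have hfix : MulAut.conjNormal a ⟨a ^ p, hap⟩ = ⟨a ^ p, hap⟩ :=
      Subtype.ext (by rw [MulAut.conjNormal_apply]; group)
    have hs := hu ⟨a ^ p, hap⟩
    rwa [hfix] at hs
  have hv : (α : V →ₗ[F] V) ^ p = ↑(u ^ p) := (Units.val_pow_eq_pow_val u p).symm
  have hvinv : (α.symm : V →ₗ[F] V) ^ p = ↑(u ^ p)⁻¹ := by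
    rw [← inv_pow, Units.val_pow_eq_pow_val]; rfl
  simp only [← Module.End.mul_eq_comp, hv, hvinv]
  refine ⟨⟨fun h => ?_, ?_⟩, ?_, fun δ hδ => ?_⟩
  · exact Units.commute_inv_mul_of_semiconjBy (SemiconjBy.pow_conjNormal hu p h)
      (σ.semiconjBy_conjNormal ⟨a ^ p, hap⟩ h)
  · exact (Units.isUnit _).mul ((Group.isUnit _).map σ)
  · exact u.commute_iff_inv_mul_cancel_assoc.mp
      ((((Commute.refl u).pow_right p).units_val.units_inv_right).mul_right hus)
  · rw [mul_assoc, mul_assoc δ, Units.mul_inv_cancel_left, (hδ ⟨a ^ p, hap⟩).eq, mul_assoc]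

/-- With `[G:H] = p` prime, `a ∈ G \ H` (so `a^p ∈ H`) and `α` intertwining `σ` with its
`a`-conjugate, the element `λ = α^{-p} σ(a^p)` lies in `Δ^× = End_{FH}(V)^×`, satisfies
`α(λ) = λ` (where `α(δ) = α⁻¹ δ α`), and `α^p(δ) = λ δ λ⁻¹` for all `δ ∈ Δ` (stated as
`α^p(δ) λ = λ δ`). -/
theorem stmt3 {F : Type*} [Field F] {G : Type*} [Group G]
    {V : Type*} [AddCommGroup V] [Module F V]
    (H : Subgroup G) (hN : H.Normal) (p : ℕ) (hp : p.Prime) (hidx : H.index = p)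
    (σ : Representation F H V) (a : G) (ha : a ∉ H) (hap : a ^ p ∈ H)
    (α : V ≃ₗ[F] V)
    (hα : ∀ h : H, σ ⟨a * ↑h * a⁻¹, hN.conj_mem ↑h h.2 a⟩ ∘ₗ (α : V →ₗ[F] V) =
      (α : V →ₗ[F] V) ∘ₗ σ h) :
    (((α.symm : V →ₗ[F] V) ^ p) ∘ₗ σ ⟨a ^ p, hap⟩ ∈
        {δ : Module.End F V | ∀ h : H, Commute δ (σ h)} ∧
      IsUnit (((α.symm : V →ₗ[F] V) ^ p) ∘ₗ σ ⟨a ^ p, hap⟩)) ∧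
    ((α.symm : V →ₗ[F] V) ∘ₗ (((α.symm : V →ₗ[F] V) ^ p) ∘ₗ σ ⟨a ^ p, hap⟩) ∘ₗ
        (α : V →ₗ[F] V) = ((α.symm : V →ₗ[F] V) ^ p) ∘ₗ σ ⟨a ^ p, hap⟩) ∧
    (∀ δ : Module.End F V, (∀ h : H, Commute δ (σ h)) →
      (((α.symm : V →ₗ[F] V) ^ p) ∘ₗ δ ∘ₗ ((α : V →ₗ[F] V) ^ p)) ∘ₗ
          (((α.symm : V →ₗ[F] V) ^ p) ∘ₗ σ ⟨a ^ p, hap⟩) =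
        (((α.symm : V →ₗ[F] V) ^ p) ∘ₗ σ ⟨a ^ p, hap⟩) ∘ₗ δ) :=
  stmt3_general H hN p σ a hap α hα
end

section
/- Let Δ be a division ring, α an automorphism of Δ, and λ ∈ Δ^× with α(λ) = λ. Suppose the restriction of α to the center Z(Δ) has order exactly p. Then the general cyclic algebra Γ = (Δ, α, λ) is a simple ring. -/
/-!
A nonzero two-sided ideal contains some `f = ∑ ι(cᵢ) xⁱ` with `c ≠ 0`; take one with the fewest
nonzero coefficients and pick `c_{i₀} ≠ 0`. For `z` central in `Δ`, `ι(α^{i₀} z) f - f ι(z)` lies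
in the ideal and has coefficients `(α^{i₀} z - αⁱ z) cᵢ`, which vanish at `i₀`; by minimality they
all vanish. Since `α^{i₀}` and `αⁱ` differ on the center for `i ≠ i₀`, this forces
`f = ι(c_{i₀}) x^{i₀}`, a unit because `x^p = ι λ` is.
-/

open Finset

theorem RingEquiv.map_mem_center {R : Type*} [Ring R] (e : R ≃+* R) {z : R}
    (hz : z ∈ Subring.center R) : e z ∈ Subring.center R := by
  rw [Subring.mem_center_iff] at hz ⊢
  intro g
  simpa using congrArg e (hz (e.symm g))

theorem TwoSidedIdeal.eq_top_of_isUnit_mem {R : Type*} [Ring R] (I : TwoSidedIdeal R) {u : R}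
    (hu : IsUnit u) (huI : u ∈ I) : I = ⊤ := by
  obtain ⟨u, rfl⟩ := hu
  exact I.one_mem_iff.1 (by simpa using I.mul_mem_left (↑u⁻¹ : R) _ huI)

theorem pow_mul_map_of_mul_map {Δ Γ : Type*} [Semiring Δ] [Semiring Γ] {α : Δ ≃+* Δ}
    {ι : Δ →+* Γ} {x : Γ} (hrel : ∀ δ : Δ, x * ι δ = ι (α δ) * x) (k : ℕ) (δ : Δ) :
    x ^ k * ι δ = ι ((α ^ k) δ) * x ^ k := by
  induction k generalizing δ with
  | zero => simp
  | succ k ih =>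
    rw [pow_succ, mul_assoc, hrel, ← mul_assoc, ih, mul_assoc, ← pow_succ, pow_succ α]
    rfl

theorem eq_of_pow_apply_eq_on_center {R : Type*} [Ring R] {α : R ≃+* R} {p : ℕ}
    (hmin : ∀ k : ℕ, 0 < k → k < p → ∃ z ∈ Subring.center R, (α ^ k) z ≠ z)
    {i j : ℕ} (hi : i < p) (hj : j < p)
    (h : ∀ z ∈ Subring.center R, (α ^ i) z = (α ^ j) z) : i = j := by
  wlog hij : i ≤ j generalizing i j
  · exact (this hj hi (fun z hz => (h z hz).symm) (le_of_not_ge hij)).symm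
  by_contra hne
  obtain ⟨z, hz, hmoved⟩ := hmin (j - i) (by omega) (by omega)
  apply hmoved
  have hj' : α ^ j = α ^ (j - i) * α ^ i := by rw [← pow_add, Nat.sub_add_cancel hij]
  simpa [hj'] using (h _ ((α ^ i).symm.map_mem_center hz)).symm

section CyclicSum

variable {Δ Γ : Type*} [DivisionRing Δ] [Ring Γ] {α : Δ ≃+* Δ} {ι : Δ →+* Γ} {x : Γ} {p : ℕ}

def cyclicSum (ι : Δ →+* Γ) (x : Γ) (c : Fin p → Δ) : Γ :=
  ∑ i : Fin p, ι (c i) * x ^ (i : ℕ)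

theorem cyclicSum_commutator_of_mem_center (hrel : ∀ δ : Δ, x * ι δ = ι (α δ) * x)
    (c : Fin p → Δ) (j : ℕ) {z : Δ} (hz : z ∈ Subring.center Δ) :
    ι ((α ^ j) z) * cyclicSum ι x c - cyclicSum ι x c * ι z =
      cyclicSum ι x (fun i => ((α ^ j) z - (α ^ (i : ℕ)) z) * c i) := by
  rw [cyclicSum, cyclicSum, mul_sum, sum_mul, ← sum_sub_distrib]
  refine sum_congr rfl fun i _ => ?_
  have hcomm : c i * (α ^ (i : ℕ)) z = (α ^ (i : ℕ)) z * c i :=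
    (Subring.mem_center_iff.1 ((α ^ (i : ℕ)).map_mem_center hz) (c i))
  rw [sub_mul, ← hcomm]
  simp only [map_sub, map_mul, sub_mul, mul_assoc, pow_mul_map_of_mul_map hrel]

theorem TwoSidedIdeal.eq_top_of_cyclicSum_mem (hrel : ∀ δ : Δ, x * ι δ = ι (α δ) * x)
    (hmin : ∀ k : ℕ, 0 < k → k < p → ∃ z ∈ Subring.center Δ, (α ^ k) z ≠ z) (hx : IsUnit x)
    (I : TwoSidedIdeal Γ) {c : Fin p → Δ} (hc : c ≠ 0) (hcI : cyclicSum ι x c ∈ I) :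
    I = ⊤ := by
  classical
  induction hn : #(univ.filter fun i => c i ≠ 0) using Nat.strong_induction_on generalizing c with
  | _ n ih =>
  obtain ⟨i₀, hi₀⟩ := Function.ne_iff.1 hc
  by_cases hsingle : ∀ i, c i ≠ 0 → i = i₀
  · have hmonomial : cyclicSum ι x c = ι (c i₀) * x ^ (i₀ : ℕ) :=
      sum_eq_single i₀ (fun i _ hi => by rw [not_imp_comm.1 (hsingle i) hi, map_zero, zero_mul])
        (by simp)
    exact I.eq_top_of_isUnit_mem ((hi₀.isUnit.map ι).mul (hx.pow _)) (hmonomial ▸ hcI)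
  push Not at hsingle
  obtain ⟨i, hi, hii₀⟩ := hsingle
  obtain ⟨z, hz, hzne⟩ : ∃ z ∈ Subring.center Δ, (α ^ (i₀ : ℕ)) z ≠ (α ^ (i : ℕ)) z := by
    by_contra! h
    exact hii₀ (Fin.ext (eq_of_pow_apply_eq_on_center hmin i₀.2 i.2 h).symm)
  set d : Fin p → Δ := fun j => ((α ^ (i₀ : ℕ)) z - (α ^ (j : ℕ)) z) * c j
  have hd : d ≠ 0 := Function.ne_iff.2 ⟨i, mul_ne_zero (sub_ne_zero.2 hzne) hi⟩
  have hdI : cyclicSum ι x d ∈ I := by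
    rw [← cyclicSum_commutator_of_mem_center hrel c _ hz]
    exact I.sub_mem (I.mul_mem_left _ _ hcI) (I.mul_mem_right _ _ hcI)
  have hsupp : (univ.filter fun j => d j ≠ 0) ⊂ univ.filter fun j => c j ≠ 0 := by
    refine (ssubset_iff_of_subset fun j => ?_).2 ⟨i₀, by simpa using hi₀, by simp [d]⟩
    simpa using right_ne_zero_of_mul
  exact ih _ (hn ▸ card_lt_card hsupp) hd hdI rfl

theorem nontrivial_of_existsUnique_cyclicSum (hp : 0 < p)
    (hbasis : ∀ γ : Γ, ∃! c : Fin p → Δ, γ = cyclicSum ι x c) : Nontrivial Γ := by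
  by_contra hΓ
  have : Subsingleton Γ := not_nontrivial_iff_subsingleton.1 hΓ
  have h := (hbasis 0).unique (y₁ := fun _ => 1) (y₂ := 0) (Subsingleton.elim _ _)
    (Subsingleton.elim _ _)
  exact one_ne_zero (congrFun h ⟨0, hp⟩)

end CyclicSum

theorem stmt6_general {Δ : Type*} [DivisionRing Δ] (α : Δ ≃+* Δ) (p : ℕ) (hp : 0 < p)
    (lam : Δ) (hlam : lam ≠ 0)
    (hmin : ∀ k : ℕ, 0 < k → k < p → ∃ z ∈ Subring.center Δ, (α ^ k) z ≠ z)
    (Γ : Type*) [Ring Γ] (ι : Δ →+* Γ) (x : Γ)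
    (hrel : ∀ δ : Δ, x * ι δ = ι (α δ) * x) (hx : x ^ p = ι lam)
    (hbasis : ∀ γ : Γ, ∃! c : Fin p → Δ, γ = ∑ i : Fin p, ι (c i) * x ^ (i : ℕ)) :
    IsSimpleRing Γ := by
  have hxunit : IsUnit x := (isUnit_pow_iff hp.ne').1 (hx ▸ hlam.isUnit.map ι)
  have : Nontrivial Γ := nontrivial_of_existsUnique_cyclicSum hp hbasis
  refine ⟨⟨fun I => ?_⟩⟩
  by_cases hI : ∃ a ∈ I, a ≠ 0
  · obtain ⟨a, haI, ha⟩ := hI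
    obtain ⟨c, rfl, -⟩ := hbasis a
    have hc : c ≠ 0 := by rintro rfl; simp at ha
    exact Or.inr (I.eq_top_of_cyclicSum_mem hrel hmin hxunit hc haI)
  · push Not at hI
    exact Or.inl (eq_bot_iff.2 fun a haI => (TwoSidedIdeal.mem_bot _).2 (hI a haI))

/-- If `α` restricted to the center of `Δ` has order exactly `p` and `α(λ) = λ`, then the
general cyclic algebra `Γ = (Δ, α, λ)` (encoded abstractly: `x ⬝ ι δ = ι (α δ) ⬝ x`,
`x^p = ι λ`, and `1, x, …, x^{p−1}` a left `Δ`-basis of `Γ`) is a simple ring. -/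
theorem stmt6 {Δ : Type*} [DivisionRing Δ] (α : Δ ≃+* Δ) (p : ℕ) (hp : 0 < p)
    (lam : Δ) (hlam : lam ≠ 0) (hfix : α lam = lam)
    (hper : ∀ z ∈ Subring.center Δ, (α ^ p) z = z)
    (hmin : ∀ k : ℕ, 0 < k → k < p → ∃ z ∈ Subring.center Δ, (α ^ k) z ≠ z)
    (Γ : Type*) [Ring Γ] (ι : Δ →+* Γ) (x : Γ)
    (hrel : ∀ δ : Δ, x * ι δ = ι (α δ) * x) (hx : x ^ p = ι lam)
    (hbasis : ∀ γ : Γ, ∃! c : Fin p → Δ, γ = ∑ i : Fin p, ι (c i) * x ^ (i : ℕ)) :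
    IsSimpleRing Γ :=
  stmt6_general α p hp lam hlam hmin Γ ι x hrel hx hbasis
end

section
/- Let Δ be a division ring, α an automorphism of Δ, λ ∈ Δ^× with α(λ) = λ and α^p(δ) = λ δ λ⁻¹ for all δ, and suppose α restricted to Z = Z(Δ) has order p with fixed field Z₀. Then the centralizer of Δ in Γ = (Δ, α, λ) equals Z, and the center of Γ equals Z₀. -/
/-!
Write `γ = ∑ ι (c i) * x ^ i`. Since `x ^ i * ι δ = ι (α^i δ) * x ^ i`, comparing coefficients in
`ι δ * γ = γ * ι δ` gives `δ * c i = c i * α^i δ` for all `δ`. Taking `δ = z` central with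
`α^i z ≠ z` (which exists for `0 < i < p`) forces `c i = 0`, and the case `i = 0` says that `c 0` is
central. So the centralizer of `Δ` is `Z(Δ)`; an element `ι z` of it is moreover central in `Γ`
exactly when it commutes with `x`, i.e. when `α z = z`.
-/

section SkewPowers

variable {Δ Γ : Type*} [Semiring Δ] [Semiring Γ] {α : Δ ≃+* Δ} {ι : Δ →+* Γ} {x : Γ}

theorem pow_mul_map_eq_map_mul_pow (hrel : ∀ δ, x * ι δ = ι (α δ) * x) (n : ℕ) (δ : Δ) :
    x ^ n * ι δ = ι ((α ^ n) δ) * x ^ n := by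
  induction n generalizing δ with
  | zero => simp
  | succ n ih =>
    rw [pow_succ, mul_assoc, hrel, ← mul_assoc, ih, mul_assoc, ← pow_succ, pow_succ α]
    rfl

theorem injective_sum_map_mul_pow {p : ℕ}
    (hbasis : ∀ γ : Γ, ∃! c : Fin p → Δ, γ = ∑ i : Fin p, ι (c i) * x ^ (i : ℕ)) :
    Function.Injective fun c : Fin p → Δ => ∑ i : Fin p, ι (c i) * x ^ (i : ℕ) := by
  intro a b hab
  obtain ⟨c, -, hc⟩ := hbasis (∑ i : Fin p, ι (a i) * x ^ (i : ℕ))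
  exact (hc a rfl).trans (hc b hab).symm

end SkewPowers

theorem eq_zero_of_forall_mul_eq_mul_apply {Δ : Type*} [DivisionRing Δ] {β : Δ → Δ} {c : Δ}
    (h : ∀ δ, δ * c = c * β δ) {z : Δ} (hz : z ∈ Subring.center Δ) (hβz : β z ≠ z) : c = 0 := by
  have hcz : c * (z - β z) = 0 := by
    rw [mul_sub, ← h, Subring.mem_center_iff.mp hz c, sub_self]
  exact (mul_eq_zero.mp hcz).resolve_right (sub_ne_zero.mpr hβz.symm)

namespace CyclicAlgebra

variable {Δ Γ : Type*} [DivisionRing Δ] [Ring Γ] {α : Δ ≃+* Δ} {ι : Δ →+* Γ} {x : Γ} {p : ℕ}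

theorem nontrivial (hp : 0 < p)
    (hbasis : ∀ γ : Γ, ∃! c : Fin p → Δ, γ = ∑ i : Fin p, ι (c i) * x ^ (i : ℕ)) :
    Nontrivial Γ := by
  have : NeZero p := ⟨hp.ne'⟩
  exact (injective_sum_map_mul_pow hbasis).nontrivial

theorem eq_zero_of_map_mul_eq_zero (hp : 0 < p) {lam : Δ} (hlam : lam ≠ 0) (hx : x ^ p = ι lam)
    (hbasis : ∀ γ : Γ, ∃! c : Fin p → Δ, γ = ∑ i : Fin p, ι (c i) * x ^ (i : ℕ))
    {d : Δ} (hd : ι d * x = 0) : d = 0 := by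
  have := nontrivial hp hbasis
  have hdlam : ι (d * lam) = ι 0 := by
    rw [map_mul, ← hx, ← Nat.succ_pred_eq_of_pos hp, pow_succ', ← mul_assoc, hd, zero_mul,
      map_zero]
  exact (mul_eq_zero.mp (ι.injective hdlam)).resolve_right hlam

theorem coeff_mul_eq_mul_coeff (hrel : ∀ δ, x * ι δ = ι (α δ) * x)
    (hbasis : ∀ γ : Γ, ∃! c : Fin p → Δ, γ = ∑ i : Fin p, ι (c i) * x ^ (i : ℕ))
    {c : Fin p → Δ} {δ : Δ}
    (hδ : ι δ * ∑ i : Fin p, ι (c i) * x ^ (i : ℕ) = (∑ i : Fin p, ι (c i) * x ^ (i : ℕ)) * ι δ)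
    (i : Fin p) : δ * c i = c i * (α ^ (i : ℕ)) δ := by
  have hcoeff : (fun j : Fin p => δ * c j) = fun j => c j * (α ^ (j : ℕ)) δ := by
    refine injective_sum_map_mul_pow hbasis ?_
    simp only [map_mul]
    calc ∑ j : Fin p, ι δ * ι (c j) * x ^ (j : ℕ)
        = ι δ * ∑ j : Fin p, ι (c j) * x ^ (j : ℕ) := by simp only [Finset.mul_sum, mul_assoc]
      _ = (∑ j : Fin p, ι (c j) * x ^ (j : ℕ)) * ι δ := hδ
      _ = ∑ j : Fin p, ι (c j) * ι ((α ^ (j : ℕ)) δ) * x ^ (j : ℕ) := by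
        simp only [Finset.sum_mul, mul_assoc, pow_mul_map_eq_map_mul_pow hrel]
  exact congrFun hcoeff i

theorem exists_mem_center_eq_of_commute (hp : 0 < p) (hrel : ∀ δ, x * ι δ = ι (α δ) * x)
    (hbasis : ∀ γ : Γ, ∃! c : Fin p → Δ, γ = ∑ i : Fin p, ι (c i) * x ^ (i : ℕ))
    (hmin : ∀ k : ℕ, 0 < k → k < p → ∃ z ∈ Subring.center Δ, (α ^ k) z ≠ z)
    {γ : Γ} (hγ : ∀ δ, ι δ * γ = γ * ι δ) : ∃ z ∈ Subring.center Δ, ι z = γ := by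
  obtain ⟨c, rfl, -⟩ := hbasis γ
  have hc : ∀ δ i, δ * c i = c i * (α ^ (i : ℕ)) δ := fun δ =>
    coeff_mul_eq_mul_coeff hrel hbasis (hγ δ)
  have hc_ne_zero : ∀ i : Fin p, i ≠ ⟨0, hp⟩ → c i = 0 := by
    intro i hi
    have hi_pos : 0 < (i : ℕ) := Nat.pos_of_ne_zero fun h => hi (Fin.ext h)
    obtain ⟨z, hz, hαz⟩ := hmin i hi_pos i.isLt
    exact eq_zero_of_forall_mul_eq_mul_apply (hc · i) hz hαz
  refine ⟨c ⟨0, hp⟩, Subring.mem_center_iff.mpr fun δ => by simpa using hc δ ⟨0, hp⟩, ?_⟩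
  rw [Fintype.sum_eq_single _ fun i hi => by rw [hc_ne_zero i hi, map_zero, zero_mul]]
  simp

theorem map_mem_center (hrel : ∀ δ, x * ι δ = ι (α δ) * x)
    (hbasis : ∀ γ : Γ, ∃! c : Fin p → Δ, γ = ∑ i : Fin p, ι (c i) * x ^ (i : ℕ))
    {z : Δ} (hz : z ∈ Subring.center Δ) (hαz : α z = z) : ι z ∈ Subring.center Γ := by
  refine Subring.mem_center_iff.mpr fun γ => ?_
  obtain ⟨c, rfl, -⟩ := hbasis γ
  rw [Finset.sum_mul, Finset.mul_sum]
  refine Finset.sum_congr rfl fun j _ => ?_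
  have hαjz : (α ^ (j : ℕ)) z = z := by
    rw [RingAut.coe_pow]
    exact Function.iterate_fixed hαz _
  rw [mul_assoc, pow_mul_map_eq_map_mul_pow hrel, hαjz, ← mul_assoc, ← map_mul,
    Subring.mem_center_iff.mp hz, map_mul, mul_assoc]

theorem centralizer_range_eq (hp : 0 < p) (hrel : ∀ δ, x * ι δ = ι (α δ) * x)
    (hbasis : ∀ γ : Γ, ∃! c : Fin p → Δ, γ = ∑ i : Fin p, ι (c i) * x ^ (i : ℕ))
    (hmin : ∀ k : ℕ, 0 < k → k < p → ∃ z ∈ Subring.center Δ, (α ^ k) z ≠ z) :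
    (Subring.centralizer (Set.range ι) : Set Γ) = ι '' Subring.center Δ := by
  ext γ
  constructor
  · intro hγ
    exact exists_mem_center_eq_of_commute hp hrel hbasis hmin fun δ => hγ (ι δ) ⟨δ, rfl⟩
  · rintro ⟨z, hz, rfl⟩ _ ⟨δ, rfl⟩
    rw [← map_mul, ← map_mul, Subring.mem_center_iff.mp hz δ]

theorem center_eq (hp : 0 < p) {lam : Δ} (hlam : lam ≠ 0) (hx : x ^ p = ι lam)
    (hrel : ∀ δ, x * ι δ = ι (α δ) * x)
    (hbasis : ∀ γ : Γ, ∃! c : Fin p → Δ, γ = ∑ i : Fin p, ι (c i) * x ^ (i : ℕ))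
    (hmin : ∀ k : ℕ, 0 < k → k < p → ∃ z ∈ Subring.center Δ, (α ^ k) z ≠ z) :
    (Subring.center Γ : Set Γ) = ι '' {z | z ∈ Subring.center Δ ∧ α z = z} := by
  ext γ
  constructor
  · intro hγ
    have hγ' := Subring.mem_center_iff.mp hγ
    obtain ⟨z, hz, rfl⟩ :=
      exists_mem_center_eq_of_commute hp hrel hbasis hmin fun δ => hγ' (ι δ)
    have hxz : ι (α z - z) * x = 0 := by rw [map_sub, sub_mul, ← hrel, hγ' x, sub_self]
    exact ⟨z, ⟨hz, sub_eq_zero.mp (eq_zero_of_map_mul_eq_zero hp hlam hx hbasis hxz)⟩, rfl⟩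
  · rintro ⟨z, ⟨hz, hαz⟩, rfl⟩
    exact map_mem_center hrel hbasis hz hαz

end CyclicAlgebra

theorem stmt7_general {Δ : Type*} [DivisionRing Δ] (α : Δ ≃+* Δ) (p : ℕ) (hp : 0 < p)
    (lam : Δ) (hlam : lam ≠ 0)
    (hmin : ∀ k : ℕ, 0 < k → k < p → ∃ z ∈ Subring.center Δ, (α ^ k) z ≠ z)
    (Γ : Type*) [Ring Γ] (ι : Δ →+* Γ) (x : Γ)
    (hrel : ∀ δ : Δ, x * ι δ = ι (α δ) * x) (hx : x ^ p = ι lam)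
    (hbasis : ∀ γ : Γ, ∃! c : Fin p → Δ, γ = ∑ i : Fin p, ι (c i) * x ^ (i : ℕ)) :
    ((Subring.centralizer (Set.range ι) : Set Γ) = ι '' (Subring.center Δ)) ∧
    ((Subring.center Γ : Set Γ) = ι '' {z | z ∈ Subring.center Δ ∧ α z = z}) :=
  ⟨CyclicAlgebra.centralizer_range_eq hp hrel hbasis hmin,
    CyclicAlgebra.center_eq hp hlam hx hrel hbasis hmin⟩

/-- If `α|Z(Δ)` has order `p`, with fixed field `Z₀`, then in the general cyclic algebra
`Γ = (Δ, α, λ)` the centralizer of `Δ` equals `Z(Δ)` and the center of `Γ` equals `Z₀`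
(both transported into `Γ` via `ι`). -/
theorem stmt7 {Δ : Type*} [DivisionRing Δ] (α : Δ ≃+* Δ) (p : ℕ) (hp : 0 < p)
    (lam : Δ) (hlam : lam ≠ 0) (hfix : α lam = lam)
    (hinner : ∀ δ : Δ, (α ^ p) δ = lam * δ * lam⁻¹)
    (hper : ∀ z ∈ Subring.center Δ, (α ^ p) z = z)
    (hmin : ∀ k : ℕ, 0 < k → k < p → ∃ z ∈ Subring.center Δ, (α ^ k) z ≠ z)
    (Γ : Type*) [Ring Γ] (ι : Δ →+* Γ) (x : Γ)
    (hrel : ∀ δ : Δ, x * ι δ = ι (α δ) * x) (hx : x ^ p = ι lam)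
    (hbasis : ∀ γ : Γ, ∃! c : Fin p → Δ, γ = ∑ i : Fin p, ι (c i) * x ^ (i : ℕ)) :
    ((Subring.centralizer (Set.range ι) : Set Γ) = ι '' (Subring.center Δ)) ∧
    ((Subring.center Γ : Set Γ) = ι '' {z | z ∈ Subring.center Δ ∧ α z = z}) :=
  stmt7_general α p hp lam hlam hmin Γ ι x hrel hx hbasis
end

section
/- Let Δ be a division ring, α an automorphism of Δ, λ ∈ Δ^× with α(λ) = λ, α^p inner via λ, and α|Z(Δ) of order p with fixed field Z₀. If dim_{Z(Δ)} Δ = d², then dim_{Z₀} (Δ, α, λ) = (pd)². -/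
/-!
Write a central element as `γ = ∑ ι (cᵢ) xⁱ`. Commuting with every `ι δ` forces
`δ cᵢ = cᵢ αⁱ(δ)`; as `αⁱ` moves some central element for `0 < i < p`, every `cᵢ` with `i ≠ 0`
vanishes, and commuting with `x` (which is regular since `xᵖ = ι λ`) forces `α(c₀) = c₀`. Hence
`Z(Γ) = ι(Z₀)`, and `[Γ : Z₀] = [Γ : Δ] [Δ : Z(Δ)] [Z(Δ) : Z₀] = p · d² · p`, the last index
coming from Artin's theorem for the cyclic group generated by `α|Z(Δ)`, of order `p`.
-/

open Function Module

section FixedField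

variable {F : Type*} [Field F] (σ : F ≃+* F)

theorem mem_fixedPoints_zpowers_iff {z : F} :
    z ∈ FixedPoints.subfield (Subgroup.zpowers σ) F ↔ σ z = z := by
  change z ∈ MulAction.fixedPoints (Subgroup.zpowers σ) F ↔ _
  simp only [MulAction.mem_fixedPoints, Subtype.forall, Subgroup.mk_smul]
  rw [Subgroup.forall_mem_zpowers]
  exact MulAction.mem_fixedBy_zpowers_iff_mem_fixedBy

theorem finrank_fixedPoints_zpowers (hσ : IsOfFinOrder σ) :
    finrank (FixedPoints.subfield (Subgroup.zpowers σ) F) F = orderOf σ := by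
  have : Finite (Subgroup.zpowers σ) := hσ.finite_zpowers
  have : Fintype (Subgroup.zpowers σ) := Fintype.ofFinite _
  rw [FixedPoints.finrank_eq_card, ← Nat.card_eq_fintype_card, Nat.card_zpowers]

end FixedField

section CenterCongr

variable {R : Type*} [Ring R] (α : R ≃+* R)

theorem Subring.coe_centerCongr_pow_apply (n : ℕ) (z : Subring.center R) :
    ((Subring.centerCongr α ^ n) z : R) = (α ^ n) z := by
  induction n generalizing z with
  | zero => rfl
  | succ n ih => exact ih (Subring.centerCongr α z)

theorem orderOf_centerCongr {p : ℕ} (hp : 0 < p)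
    (hper : ∀ z ∈ Subring.center R, (α ^ p) z = z)
    (hmin : ∀ k : ℕ, 0 < k → k < p → ∃ z ∈ Subring.center R, (α ^ k) z ≠ z) :
    orderOf (Subring.centerCongr α) = p := by
  refine (orderOf_eq_iff hp).2 ⟨?_, fun k hkp hk hσk => ?_⟩
  · ext z
    exact (Subring.coe_centerCongr_pow_apply α p z).trans (hper z z.2)
  · obtain ⟨z, hz, hαz⟩ := hmin k hk hkp
    refine hαz ?_
    simpa only [hσk, RingAut.one_apply] using (Subring.coe_centerCongr_pow_apply α k ⟨z, hz⟩).symm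

end CenterCongr

section LeftComb

variable {D Γ : Type*} [DivisionRing D] [Ring Γ] (ι : D →+* Γ) {p : ℕ}

def leftComb (b : Fin p → Γ) (c : Fin p → D) : Γ :=
  ∑ i, ι (c i) * b i

theorem map_mul_leftComb (b : Fin p → Γ) (δ : D) (c : Fin p → D) :
    ι δ * leftComb ι b c = leftComb ι b (δ • c) := by
  simp only [leftComb, Finset.mul_sum, Pi.smul_apply, smul_eq_mul, map_mul, mul_assoc]

theorem finrank_center_eq_of_bijective_leftComb (K : Type*) [Field K] [Algebra K D]
    [Nontrivial Γ] {b : Fin p → Γ} (hb : Bijective (leftComb ι b))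
    (hcenter : ∀ γ : Γ, γ ∈ Subring.center Γ ↔ ∃ k : K, ι (algebraMap K D k) = γ) :
    finrank (Subring.center Γ) Γ = finrank K D * p := by
  let _ : Module D Γ := Module.compHom Γ ι
  let _ : Module K Γ := Module.compHom Γ (ι.comp (algebraMap K D))
  have : IsScalarTower K D Γ :=
    ⟨fun k δ γ => by
      change ι (k • δ) * γ = ι (algebraMap K D k) * (ι δ * γ)
      rw [Algebra.smul_def, map_mul, mul_assoc]⟩
  let e : (Fin p → D) ≃ₗ[D] Γ := LinearEquiv.ofBijective
    { toFun := leftComb ι b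
      map_add' := fun c c' => by
        simp only [leftComb, Pi.add_apply, map_add, add_mul, Finset.sum_add_distrib]
      map_smul' := fun δ c => (map_mul_leftComb ι b δ c).symm } hb
  let i : K → Subring.center Γ := fun k => ⟨ι (algebraMap K D k), (hcenter _).2 ⟨k, rfl⟩⟩
  have hi : Bijective i :=
    ⟨fun k k' h => (algebraMap K D).injective (ι.injective (congrArg Subtype.val h)),
      fun γ => (hcenter γ).1 γ.2 |>.imp fun k hk => Subtype.ext hk⟩
  have hrank : finrank (Subring.center Γ) Γ = finrank K Γ :=
    congrArg Cardinal.toNat (rank_eq_of_equiv_equiv i (AddEquiv.refl Γ) hi fun _ _ => rfl).symm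
  rw [hrank, ← finrank_mul_finrank K D Γ, ← e.finrank_eq, finrank_fin_fun]

end LeftComb

section CyclicAlgebra

variable {Δ Γ : Type*} [DivisionRing Δ] [Ring Γ] {α : Δ ≃+* Δ} {ι : Δ →+* Γ} {x : Γ}
  {p : ℕ} (hrel : ∀ δ : Δ, x * ι δ = ι (α δ) * x)
include hrel

theorem pow_mul_map (n : ℕ) (δ : Δ) : x ^ n * ι δ = ι ((α ^ n) δ) * x ^ n := by
  induction n generalizing δ with
  | zero => simp
  | succ n ih => rw [pow_succ, mul_assoc, hrel, ← mul_assoc, ih, mul_assoc]; rfl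

theorem leftComb_pow_mul_map (c : Fin p → Δ) (δ : Δ) :
    leftComb ι (fun i : Fin p => x ^ (i : ℕ)) c * ι δ =
      leftComb ι (fun i : Fin p => x ^ (i : ℕ)) fun i => c i * (α ^ (i : ℕ)) δ := by
  simp only [leftComb, Finset.sum_mul, mul_assoc, pow_mul_map hrel, map_mul]

theorem mul_coeff_eq_of_mem_center (hS : Injective (leftComb ι fun i : Fin p => x ^ (i : ℕ)))
    {c : Fin p → Δ} (hc : leftComb ι (fun i : Fin p => x ^ (i : ℕ)) c ∈ Subring.center Γ)
    (δ : Δ) (i : Fin p) : δ * c i = c i * (α ^ (i : ℕ)) δ := by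
  have := hS <| (map_mul_leftComb ι _ δ c).symm.trans <|
    (Subring.mem_center_iff.1 hc (ι δ)).trans (leftComb_pow_mul_map hrel c δ)
  exact congrFun this i

theorem coeff_eq_zero_of_mem_center (hS : Injective (leftComb ι fun i : Fin p => x ^ (i : ℕ)))
    (hmin : ∀ k : ℕ, 0 < k → k < p → ∃ z ∈ Subring.center Δ, (α ^ k) z ≠ z)
    {c : Fin p → Δ} (hc : leftComb ι (fun i : Fin p => x ^ (i : ℕ)) c ∈ Subring.center Γ)
    {i : Fin p} (hi : (i : ℕ) ≠ 0) : c i = 0 := by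
  by_contra hci
  obtain ⟨z, hz, hαz⟩ := hmin i (Nat.pos_of_ne_zero hi) i.isLt
  refine hαz (mul_left_cancel₀ hci ?_)
  rw [← mul_coeff_eq_of_mem_center hrel hS hc, Subring.mem_center_iff.1 hz]

omit hrel in
theorem map_mul_right_injective [Nontrivial Γ] [NeZero p] {lam : Δ} (hlam : lam ≠ 0)
    (hx : x ^ p = ι lam) : Injective fun a : Δ => ι a * x := by
  intro a b hab
  have : ι (a * lam) = ι (b * lam) := by
    rw [map_mul, map_mul, ← hx, ← Nat.sub_one_add_one (NeZero.ne p), pow_succ', ← mul_assoc,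
      ← mul_assoc]
    exact congrArg (· * x ^ (p - 1)) hab
  exact mul_right_cancel₀ hlam (ι.injective this)

theorem mem_center_iff [Nontrivial Γ] [NeZero p] {lam : Δ} (hlam : lam ≠ 0)
    (hx : x ^ p = ι lam) (hmin : ∀ k : ℕ, 0 < k → k < p → ∃ z ∈ Subring.center Δ, (α ^ k) z ≠ z)
    (hS : Bijective (leftComb ι fun i : Fin p => x ^ (i : ℕ))) {γ : Γ} :
    γ ∈ Subring.center Γ ↔ ∃ z ∈ Subring.center Δ, α z = z ∧ ι z = γ := by
  constructor
  · intro hγ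
    obtain ⟨c, rfl⟩ := hS.2 γ
    have hγ0 : leftComb ι (fun i : Fin p => x ^ (i : ℕ)) c = ι (c 0) := by
      rw [leftComb, Finset.sum_eq_single 0 (fun i _ hi => by
          rw [coeff_eq_zero_of_mem_center hrel hS.1 hmin hγ (Fin.val_ne_zero_iff.2 hi), map_zero,
            zero_mul])
        (fun h => absurd (Finset.mem_univ 0) h)]
      simp
    refine ⟨c 0, Subring.mem_center_iff.2 fun δ => ?_, map_mul_right_injective hlam hx ?_, hγ0.symm⟩
    · simpa using mul_coeff_eq_of_mem_center hrel hS.1 hγ δ 0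
    · change ι (α (c 0)) * x = ι (c 0) * x
      rw [← hrel, ← hγ0, Subring.mem_center_iff.1 hγ x]
  · rintro ⟨z, hz, hαz, rfl⟩
    refine Subring.mem_center_iff.2 fun γ => ?_
    obtain ⟨c, rfl⟩ := hS.2 γ
    have hzx : Commute (ι z) x := by rw [Commute, SemiconjBy, ← hαz, ← hrel, hαz]
    refine (Commute.sum_right _ _ _ fun i _ => ?_).eq.symm
    have hzc : Commute z (c i) := (Subring.mem_center_iff.1 hz (c i)).symm
    exact (hzc.map ι).mul_right (hzx.pow_right _)

end CyclicAlgebra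

theorem stmt8_general {Δ : Type*} [DivisionRing Δ] (α : Δ ≃+* Δ) (p : ℕ) (hp : 0 < p)
    (lam : Δ) (hlam : lam ≠ 0)
    (hper : ∀ z ∈ Subring.center Δ, (α ^ p) z = z)
    (hmin : ∀ k : ℕ, 0 < k → k < p → ∃ z ∈ Subring.center Δ, (α ^ k) z ≠ z)
    (Γ : Type*) [Ring Γ] (ι : Δ →+* Γ) (x : Γ)
    (hrel : ∀ δ : Δ, x * ι δ = ι (α δ) * x) (hx : x ^ p = ι lam)
    (hbasis : ∀ γ : Γ, ∃! c : Fin p → Δ, γ = ∑ i : Fin p, ι (c i) * x ^ (i : ℕ))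
    (d : ℕ) (hd : Module.finrank (Subring.center Δ) Δ = d ^ 2) :
    Module.finrank (Subring.center Γ) Γ = (p * d) ^ 2 := by
  have : NeZero p := ⟨hp.ne'⟩
  have hS : Bijective (leftComb ι fun i : Fin p => x ^ (i : ℕ)) :=
    (bijective_iff_existsUnique _).2 fun γ => by
      simpa only [leftComb, eq_comm (a := γ)] using hbasis γ
  have : Nontrivial Γ := hS.1.nontrivial
  let σ := Subring.centerCongr α
  let Z₀ := FixedPoints.subfield (Subgroup.zpowers σ) (Subring.center Δ)
  have hσ : orderOf σ = p := orderOf_centerCongr α hp hper hmin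
  have hZ₀ : finrank Z₀ (Subring.center Δ) = p := by
    rw [finrank_fixedPoints_zpowers σ (orderOf_pos_iff.1 (hσ ▸ hp)), hσ]
  have hcenter (γ : Γ) : γ ∈ Subring.center Γ ↔ ∃ z : Z₀, ι (algebraMap Z₀ Δ z) = γ := by
    rw [mem_center_iff hrel hlam hx hmin hS]
    constructor
    · rintro ⟨z, hz, hαz, rfl⟩
      exact ⟨⟨⟨z, hz⟩, (mem_fixedPoints_zpowers_iff σ).2 (Subtype.ext hαz)⟩, rfl⟩
    · rintro ⟨⟨z, hz⟩, rfl⟩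
      exact ⟨z, z.2, congrArg Subtype.val ((mem_fixedPoints_zpowers_iff σ).1 hz), rfl⟩
  rw [finrank_center_eq_of_bijective_leftComb ι Z₀ hS hcenter,
    ← finrank_mul_finrank Z₀ (Subring.center Δ) Δ, hZ₀, hd]
  ring

/-- If `α|Z(Δ)` has order `p` (so `[Z(Δ) : Z₀] = p` where `Z₀` is the fixed field,
which coincides with the center of `Γ`), and `dim_{Z(Δ)} Δ = d²`, then the general
cyclic algebra `Γ = (Δ, α, λ)` satisfies `dim_{Z₀} Γ = (pd)²`; here `Z₀` is realized
as the center of `Γ`. -/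
theorem stmt8 {Δ : Type*} [DivisionRing Δ] (α : Δ ≃+* Δ) (p : ℕ) (hp : 0 < p)
    (lam : Δ) (hlam : lam ≠ 0) (hfix : α lam = lam)
    (hinner : ∀ δ : Δ, (α ^ p) δ = lam * δ * lam⁻¹)
    (hper : ∀ z ∈ Subring.center Δ, (α ^ p) z = z)
    (hmin : ∀ k : ℕ, 0 < k → k < p → ∃ z ∈ Subring.center Δ, (α ^ k) z ≠ z)
    (Γ : Type*) [Ring Γ] (ι : Δ →+* Γ) (x : Γ)
    (hrel : ∀ δ : Δ, x * ι δ = ι (α δ) * x) (hx : x ^ p = ι lam)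
    (hbasis : ∀ γ : Γ, ∃! c : Fin p → Δ, γ = ∑ i : Fin p, ι (c i) * x ^ (i : ℕ))
    (d : ℕ) (hd : Module.finrank (Subring.center Δ) Δ = d ^ 2) :
    Module.finrank (Subring.center Γ) Γ = (p * d) ^ 2 :=
  stmt8_general α p hp lam hlam hper hmin Γ ι x hrel hx hbasis d hd
end

section
/- Let Δ be a division algebra with center F, and let μ(s) ∈ F[s] be irreducible of prime degree. If μ has no root in Δ, then the quotient ring Δ[s]/μ(s)Δ[s] is a division algebra. -/
/-!
The kernel `μ Δ[s]` is a two-sided ideal. A nonzero two-sided ideal of `Δ[s]` is generated by a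
monic polynomial of least degree, which commutes with `Δ` and so has coefficients in the center
`F`; as `μ` is irreducible in `F[s]`, the quotient `Q` is a simple ring. It is a left `Δ`-space of
prime dimension `p = deg μ`, so by Wedderburn–Artin `Q ≅ Sⁿ` for a simple left ideal `S` with
`n · dim_Δ S = p`. If `n = 1`, `Q` is simple as a module over itself, i.e. a division ring. If
`dim_Δ S = 1`, then `s` acts on a generator of `S` as some `δ ∈ Δ`, every `f` acts as `f(δ)`,
and `μ(δ) = 0`.
-/

open Polynomial Module

section DivisionRing

variable {Δ : Type*} [DivisionRing Δ]

theorem Polynomial.exists_monic_mem_forall_dvd (J : Ideal Δ[X]) [J.IsTwoSided] (hJ : J ≠ ⊥) :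
    ∃ w ∈ J, w.Monic ∧ ∀ x ∈ J, w ∣ x := by
  classical
  have hex : ∃ n, ∃ x ∈ J, x ≠ 0 ∧ x.natDegree = n := by
    obtain ⟨x, hxJ, hx0⟩ := Submodule.exists_mem_ne_zero_of_ne_bot hJ
    exact ⟨_, x, hxJ, hx0, rfl⟩
  obtain ⟨x₀, hx₀J, hx₀0, hx₀deg⟩ := Nat.find_spec hex
  set w := x₀ * C x₀.leadingCoeff⁻¹
  have hwm : w.Monic := monic_mul_leadingCoeff_inv hx₀0
  have hwJ : w ∈ J := Ideal.mul_mem_right _ _ hx₀J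
  have hwdeg : w.natDegree = Nat.find hex := by
    rw [← hx₀deg, natDegree_mul hx₀0 (by simpa using hx₀0), natDegree_C, add_zero]
  refine ⟨w, hwJ, hwm, fun x hxJ => ⟨x /ₘ w, ?_⟩⟩
  -- `/ₘ` puts the quotient to the right of `w`, so this step needs `J` to be two-sided.
  have hrJ : x %ₘ w ∈ J := by
    rw [modByMonic_eq_sub_mul_div x w]
    exact J.sub_mem hxJ (Ideal.mul_mem_right _ _ hwJ)
  have hr0 : x %ₘ w = 0 := by
    by_contra hr0
    have hlt : (x %ₘ w).natDegree < w.natDegree :=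
      natDegree_lt_natDegree hr0 (degree_modByMonic_lt x hwm)
    exact (Nat.find_min hex (hwdeg ▸ hlt)) ⟨_, hrJ, hr0, rfl⟩
  simpa [hr0] using (modByMonic_add_div x w).symm

theorem Polynomial.Monic.commute_C_of_forall_dvd {J : Ideal Δ[X]} [J.IsTwoSided] {w : Δ[X]}
    (hwm : w.Monic) (hwJ : w ∈ J) (hdvd : ∀ x ∈ J, w ∣ x) (d : Δ) : Commute w (C d) := by
  rcases eq_or_ne d 0 with rfl | hd
  · simp
  by_contra hne
  have hsub0 : w * C d - C d * w ≠ 0 := sub_ne_zero.mpr hne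
  obtain ⟨z, hz⟩ := hdvd _ (J.sub_mem (Ideal.mul_mem_right _ _ hwJ) (J.mul_mem_left _ hwJ))
  have hz0 : z ≠ 0 := by rintro rfl; exact hsub0 (by rw [hz, mul_zero])
  have hdeg : (w * C d).degree = (C d * w).degree := by
    rw [degree_mul_C hd, degree_C_mul hd]
  have hlt := degree_sub_lt_left hdeg (mul_ne_zero hwm.ne_zero (C_ne_zero.mpr hd)) (by
    rw [leadingCoeff_mul, leadingCoeff_mul, hwm.leadingCoeff, leadingCoeff_C, one_mul, mul_one])
  rw [hz, degree_mul_C hd] at hlt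
  exact hlt.not_ge (degree_le_mul_left w hz0)

end DivisionRing

theorem Polynomial.mem_lifts_of_forall_commute_C {F Δ : Type*} [Field F] [Ring Δ] [Algebra F Δ]
    (hcent : ∀ z : Δ, z ∈ Subring.center Δ → ∃ c : F, z = algebraMap F Δ c)
    {w : Δ[X]} (hw : ∀ d, Commute w (C d)) : w ∈ lifts (algebraMap F Δ) := by
  refine (lifts_iff_coeff_lifts w).mpr fun n => ?_
  obtain ⟨c, hc⟩ := hcent _ (Subring.mem_center_iff.mpr fun d => by
    simpa only [coeff_mul_C, coeff_C_mul] using (congrArg (coeff · n) (hw d).eq).symm)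
  exact ⟨c, hc.symm⟩

theorem Polynomial.eq_top_or_forall_map_dvd_of_isTwoSided {F Δ : Type*} [Field F] [DivisionRing Δ]
    [Algebra F Δ] (hcent : ∀ z : Δ, z ∈ Subring.center Δ → ∃ c : F, z = algebraMap F Δ c)
    {μ : F[X]} (hirr : Irreducible μ) (J : Ideal Δ[X]) [J.IsTwoSided]
    (hμJ : μ.map (algebraMap F Δ) ∈ J) :
    J = ⊤ ∨ ∀ x ∈ J, μ.map (algebraMap F Δ) ∣ x := by
  have hJ : J ≠ ⊥ := fun h => by
    rw [h, Submodule.mem_bot, Polynomial.map_eq_zero_iff (algebraMap F Δ).injective] at hμJ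
    exact hirr.ne_zero hμJ
  obtain ⟨w, hwJ, hwm, hdvd⟩ := exists_monic_mem_forall_dvd J hJ
  obtain ⟨σ, rfl⟩ := mem_lifts_of_forall_commute_C hcent (hwm.commute_C_of_forall_dvd hwJ hdvd)
  set K := J.comap (mapRingHom (algebraMap F Δ))
  have hμK : Ideal.span {μ} ≤ K := (Ideal.span_singleton_le_iff_mem K).mpr hμJ
  by_cases hK : K = ⊤
  · left
    rw [Ideal.eq_top_iff_one] at hK ⊢
    simpa [K] using hK
  · right
    have hKμ : K = Ideal.span {μ} :=
      ((PrincipalIdealRing.isMaximal_of_irreducible hirr).eq_of_le hK hμK).symm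
    have hμσ : μ ∣ σ := Ideal.mem_span_singleton.mp (hKμ ▸ hwJ)
    exact fun x hx => (map_dvd _ hμσ).trans (hdvd x hx)

section Quotient

variable {Δ Q : Type*} [DivisionRing Δ] [Ring Q] [Module Δ Q] {π : Δ[X] →+* Q}

theorem nonempty_linearEquiv_fin_natDegree_of_ker [IsScalarTower Δ Q Q]
    (hπC : ∀ d, π (C d) = d • (1 : Q)) (hsurj : Function.Surjective π) {m : Δ[X]} (hm : m ≠ 0)
    (hker : ∀ f, π f = 0 ↔ m ∣ f) :
    Nonempty (Q ≃ₗ[Δ] (Fin m.natDegree → Δ)) := by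
  let φ : Δ[X] →ₗ[Δ] Q :=
    { toFun := π
      map_add' := map_add π
      map_smul' := fun d f => by rw [smul_eq_C_mul, map_mul, hπC, smul_one_mul, RingHom.id_apply] }
  let ψ := φ ∘ₗ (degreeLT Δ m.natDegree).subtype
  have hinj : Function.Injective ψ := by
    refine (injective_iff_map_eq_zero ψ).mpr ?_
    rintro ⟨f, hf⟩ hψf
    obtain ⟨y, rfl⟩ := (hker f).mp hψf
    obtain rfl | hy := eq_or_ne y 0
    · simp
    rw [mem_degreeLT, ← degree_eq_natDegree hm] at hf
    exact absurd hf (degree_le_mul_left m hy).not_gt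
  have hsurj' : Function.Surjective ψ := by
    intro q
    obtain ⟨f, rfl⟩ := hsurj q
    set m' := m * C m.leadingCoeff⁻¹
    have hm' : m'.Monic := monic_mul_leadingCoeff_inv hm
    have hm'deg : m'.degree = m.natDegree := by
      rw [degree_mul_C (inv_ne_zero (leadingCoeff_ne_zero.mpr hm)), degree_eq_natDegree hm]
    refine ⟨⟨f %ₘ m', mem_degreeLT.mpr (hm'deg ▸ degree_modByMonic_lt f hm')⟩, ?_⟩
    have hdiv : π (m' * (f /ₘ m')) = 0 := (hker _).mpr ⟨_, mul_assoc _ _ _⟩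
    change π (f %ₘ m') = π f
    conv_rhs => rw [← modByMonic_add_div f m', map_add, hdiv, add_zero]
  exact ⟨(LinearEquiv.ofBijective ψ ⟨hinj, hsurj'⟩).symm.trans (degreeLTEquiv Δ _)⟩

theorem eval_smul_of_map_X_smul (hπC : ∀ d, π (C d) = d • (1 : Q)) {M : Type*} [AddCommGroup M]
    [Module Q M] [Module Δ M] [IsScalarTower Δ Q M] {v : M} {δ : Δ} (hv : π X • v = δ • v)
    (f : Δ[X]) : π f • v = f.eval δ • v := by
  have hmon : ∀ n a, π (C a * X ^ n) • v = (a * δ ^ n) • v := by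
    intro n
    induction n with
    | zero => intro a; rw [pow_zero, pow_zero, mul_one, mul_one, hπC, smul_one_smul]
    | succ n ih =>
      intro a
      rw [pow_succ, ← mul_assoc, map_mul, mul_smul, hv, ← smul_one_smul Q δ v, ← hπC, ← mul_smul,
        ← map_mul, mul_assoc, X_pow_mul_C, ← mul_assoc, ← C_mul, ih, mul_assoc, ← pow_succ']
  induction f using Polynomial.induction_on' with
  | add f g hf hg => rw [map_add, add_smul, hf, hg, eval_add, add_smul]
  | monomial n a => rw [← C_mul_X_pow_eq_monomial, hmon, eval_C_mul, eval_X_pow]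

theorem exists_eval_eq_zero_of_finrank_eq_one (hπC : ∀ d, π (C d) = d • (1 : Q)) (M : Type*)
    [AddCommGroup M] [Module Q M] [Module Δ M] [IsScalarTower Δ Q M] (hM : finrank Δ M = 1) :
    ∃ δ : Δ, ∀ f, π f = 0 → f.eval δ = 0 := by
  obtain ⟨v, hv0, hspan⟩ := finrank_eq_one_iff'.mp hM
  obtain ⟨δ, hδ⟩ := hspan (π X • v)
  refine ⟨δ, fun f hf => ?_⟩
  have := eval_smul_of_map_X_smul hπC hδ.symm f
  rw [hf, zero_smul, eq_comm, smul_eq_zero] at this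
  exact this.resolve_right hv0

end Quotient

theorem isSimpleRing_of_ker_eq {F Δ Q : Type*} [Field F] [DivisionRing Δ] [Algebra F Δ] [Ring Q]
    [Nontrivial Q] (hcent : ∀ z : Δ, z ∈ Subring.center Δ → ∃ c : F, z = algebraMap F Δ c)
    {μ : F[X]} (hirr : Irreducible μ) {π : Δ[X] →+* Q} (hsurj : Function.Surjective π)
    (hker : ∀ f, π f = 0 ↔ μ.map (algebraMap F Δ) ∣ f) : IsSimpleRing Q := by
  refine isSimpleRing_iff_isTwoSided_imp.mpr ⟨inferInstance, fun I _ => ?_⟩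
  have hμ : μ.map (algebraMap F Δ) ∈ I.comap π := by
    simp [Ideal.mem_comap, (hker _).mpr dvd_rfl]
  rcases Polynomial.eq_top_or_forall_map_dvd_of_isTwoSided hcent hirr _ hμ with htop | hdvd
  · right
    rw [Ideal.eq_top_iff_one] at htop ⊢
    simpa using htop
  · left
    refine (Submodule.eq_bot_iff I).mpr fun q hq => ?_
    obtain ⟨f, rfl⟩ := hsurj q
    exact (hker f).mpr (hdvd f hq)

theorem IsSimpleRing.forall_isUnit_or_exists_finrank_eq_one {Δ Q : Type*} [DivisionRing Δ]
    [Ring Q] [IsSimpleRing Q] [Module Δ Q] [IsScalarTower Δ Q Q] (hp : (finrank Δ Q).Prime) :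
    (∀ q : Q, q ≠ 0 → IsUnit q) ∨ ∃ S : Ideal Q, finrank Δ S = 1 := by
  have : Module.Finite Δ Q := Module.finite_of_finrank_pos hp.pos
  have : IsArtinianRing Q := isArtinian_of_tower Δ inferInstance
  obtain ⟨n, _, S, _, ⟨e⟩⟩ := (IsSimpleRing.isIsotypic Q Q).linearEquiv_fun
  have : Module.Finite Δ S := .of_injective (S.subtype.restrictScalars Δ) Subtype.val_injective
  have hdim : finrank Δ Q = n * finrank Δ S := by
    rw [(e.restrictScalars Δ).finrank_eq, finrank_pi_fintype, Finset.sum_const, Finset.card_univ,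
      Fintype.card_fin, smul_eq_mul]
  rw [hdim] at hp
  rcases Nat.prime_mul_iff.mp hp with ⟨-, hS⟩ | ⟨-, rfl⟩
  · exact .inr ⟨S, hS⟩
  · have : IsSimpleModule Q Q := .congr (e.trans (LinearEquiv.funUnique (Fin 1) Q S))
    exact .inl (isSimpleModule_self_iff_isUnit.mp this).2

theorem stmt15_general {F : Type*} [Field F] {Δ : Type*} [DivisionRing Δ] [Algebra F Δ]
    (hcent : ∀ z : Δ, z ∈ Subring.center Δ ↔ ∃ c : F, z = algebraMap F Δ c)
    (μ : Polynomial F) (hirr : Irreducible μ) (hdeg : μ.natDegree.Prime)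
    (hroot : ¬ ∃ δ : Δ, Polynomial.aeval δ μ = 0)
    (Q : Type*) [Ring Q] (π : Polynomial Δ →+* Q) (hsurj : Function.Surjective π)
    (hker : ∀ f : Polynomial Δ, π f = 0 ↔ ∃ g, f = μ.map (algebraMap F Δ) * g) :
    Nontrivial Q ∧ ∀ q : Q, q ≠ 0 → IsUnit q := by
  let : Module Δ Q := Module.compHom Q (π.comp C)
  have : IsScalarTower Δ Q Q := ⟨fun _ _ _ => mul_assoc _ _ _⟩
  have hπC : ∀ d, π (C d) = d • (1 : Q) := fun d => (mul_one _).symm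
  have hker' : ∀ f, π f = 0 ↔ μ.map (algebraMap F Δ) ∣ f := hker
  have hinj := (algebraMap F Δ).injective
  obtain ⟨e⟩ := nonempty_linearEquiv_fin_natDegree_of_ker hπC hsurj
    ((Polynomial.map_ne_zero_iff hinj).mpr hirr.ne_zero) hker'
  have hdim : finrank Δ Q = μ.natDegree := by
    rw [e.finrank_eq, finrank_fin_fun, natDegree_map_eq_of_injective hinj]
  have : Nontrivial Q := Module.nontrivial_of_finrank_pos (hdim ▸ hdeg.pos)
  have : IsSimpleRing Q := isSimpleRing_of_ker_eq (fun z => (hcent z).mp) hirr hsurj hker'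
  refine ⟨inferInstance, ?_⟩
  rcases IsSimpleRing.forall_isUnit_or_exists_finrank_eq_one (hdim ▸ hdeg) with hunit | ⟨S, hS⟩
  · exact hunit
  · obtain ⟨δ, hδ⟩ := exists_eval_eq_zero_of_finrank_eq_one hπC S hS
    exact absurd ⟨δ, by rw [← eval_map_algebraMap]; exact hδ _ ((hker' _).mpr dvd_rfl)⟩ hroot

/-- If `Δ` is a finite-dimensional division algebra with center `F` and `μ(s) ∈ F[s]` is
irreducible of prime degree with no root in `Δ`, then `Δ[s]/μ(s)Δ[s]` (encoded via the
quotient map `π` from the polynomial ring `Δ[s]`) is a division ring. -/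
theorem stmt15 {F : Type*} [Field F] {Δ : Type*} [DivisionRing Δ] [Algebra F Δ]
    [FiniteDimensional F Δ]
    (hcent : ∀ z : Δ, z ∈ Subring.center Δ ↔ ∃ c : F, z = algebraMap F Δ c)
    (μ : Polynomial F) (hirr : Irreducible μ) (hdeg : μ.natDegree.Prime)
    (hroot : ¬ ∃ δ : Δ, Polynomial.aeval δ μ = 0)
    (Q : Type*) [Ring Q] (π : Polynomial Δ →+* Q) (hsurj : Function.Surjective π)
    (hker : ∀ f : Polynomial Δ, π f = 0 ↔ ∃ g, f = μ.map (algebraMap F Δ) * g) :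
    Nontrivial Q ∧ ∀ q : Q, q ≠ 0 → IsUnit q :=
  stmt15_general hcent μ hirr hdeg hroot Q π hsurj hker
end

section
/- Let Δ be a finite-dimensional central division algebra over F and K = F[s]/μ(s)F[s] a field extension of F of prime degree q, with μ irreducible over F. If Δ ⊗_F K is not a division algebra, then K embeds as a subfield of Δ; in particular μ(s) has a root in Δ. -/
/-!
Since `Δ` is central, `Δ ⊗_F K` is a simple ring: in the `Δ`-basis `1 ⊗ bᵢ`, an element of a
nonzero two-sided ideal with minimal support and a coordinate `1` commutes with `Δ ⊗ 1` (else
`d • t - t (d ⊗ 1)` has smaller support), so it is some `1 ⊗ k`, a unit. Being finite-dimensional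
over `Δ`, the ring `Δ ⊗ K` is artinian, hence `Sⁿ` as a left module over itself for a simple left
ideal `S`. Then `n · dim_Δ S = [K : F]` is prime, and `n = 1` would make `Δ ⊗ K` a division ring,
so `S = Δ v` is a line. `K` acts on `S` through `1 ⊗ K`, commuting with `Δ`, so
`(1 ⊗ y) v = g(y) v` defines an `F`-algebra embedding `g : K → Δ`.
-/

open scoped TensorProduct
open Module

section

variable {F Δ K : Type*} [Field F] [DivisionRing Δ] [Algebra F Δ] [Field K] [Algebra F K]

section

variable {M : Type*} [AddCommGroup M] [Module (Δ ⊗[F] K) M] [Module Δ M]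
  [IsScalarTower Δ (Δ ⊗[F] K) M]

theorem tmul_one_smul (d : Δ) (w : M) : (d ⊗ₜ[F] (1 : K)) • w = d • w := by
  rw [← smul_one_smul (Δ ⊗[F] K) d w, Algebra.TensorProduct.one_def, TensorProduct.smul_tmul',
    smul_eq_mul, mul_one]

theorem one_tmul_smul_smul (y : K) (d : Δ) (w : M) :
    ((1 : Δ) ⊗ₜ[F] y) • d • w = d • ((1 : Δ) ⊗ₜ[F] y) • w := by
  rw [← tmul_one_smul (F := F) (K := K), ← tmul_one_smul (F := F) (K := K), smul_smul,
    smul_smul, Algebra.TensorProduct.tmul_mul_tmul, Algebra.TensorProduct.tmul_mul_tmul,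
    one_mul, mul_one, one_mul, mul_one]

theorem nonempty_algHom_of_finrank_eq_one (hM : finrank Δ M = 1) : Nonempty (K →ₐ[F] Δ) := by
  obtain ⟨v, hv0, hv⟩ := finrank_eq_one_iff'.1 hM
  choose g hg using fun y : K => hv (((1 : Δ) ⊗ₜ[F] y) • v)
  have hg_eq : ∀ y d, d • v = ((1 : Δ) ⊗ₜ[F] y) • v → g y = d :=
    fun y d h => smul_left_injective Δ hv0 ((hg y).trans h.symm)
  refine ⟨{
    toFun := g
    map_one' := hg_eq _ _ ?_
    map_mul' := fun y y' => hg_eq _ _ ?_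
    map_zero' := hg_eq _ _ ?_
    map_add' := fun y y' => hg_eq _ _ ?_
    commutes' := fun c => hg_eq _ _ ?_ }⟩
  · rw [one_smul, ← Algebra.TensorProduct.one_def, one_smul]
  · rw [mul_comm y, ← one_mul (1 : Δ), ← Algebra.TensorProduct.tmul_mul_tmul, mul_smul,
      mul_smul, ← hg y, one_tmul_smul_smul, ← hg y']
  · rw [zero_smul, TensorProduct.tmul_zero, zero_smul]
  · rw [TensorProduct.tmul_add, add_smul, add_smul, hg, hg]
  · rw [← tmul_one_smul (F := F) (K := K), Algebra.algebraMap_eq_smul_one,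
      Algebra.algebraMap_eq_smul_one, TensorProduct.tmul_smul, TensorProduct.smul_tmul']

end

theorem Algebra.TensorProduct.basis_repr_mul_tmul_one {ι : Type*} (b : Basis ι F K)
    (t : Δ ⊗[F] K) (d : Δ) (i : ι) :
    (basis Δ b).repr (t * (d ⊗ₜ[F] (1 : K))) i = (basis Δ b).repr t i * d := by
  induction t using TensorProduct.induction_on with
  | zero => simp
  | tmul x y =>
    simp only [tmul_mul_tmul, mul_one, basis_repr_tmul, Finsupp.smul_apply,
      Finsupp.mapRange_apply, smul_eq_mul, mul_assoc, Algebra.commutes]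
  | add x y hx hy => simp [add_mul, hx, hy]

theorem Algebra.TensorProduct.basis_repr_smul_sub_mul_tmul_one {ι : Type*} (b : Basis ι F K)
    (d : Δ) (t : Δ ⊗[F] K) (i : ι) :
    (basis Δ b).repr (d • t - t * (d ⊗ₜ[F] (1 : K))) i
      = d * (basis Δ b).repr t i - (basis Δ b).repr t i * d := by
  rw [map_sub, Finsupp.sub_apply, map_smul, Finsupp.smul_apply, smul_eq_mul,
    basis_repr_mul_tmul_one]

theorem Algebra.TensorProduct.exists_eq_one_tmul_of_basis_repr_mem_center
    [Algebra.IsCentral F Δ] {ι : Type*} (b : Basis ι F K) (t : Δ ⊗[F] K)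
    (h : ∀ i, (basis Δ b).repr t i ∈ Subalgebra.center F Δ) :
    ∃ k : K, t = (1 : Δ) ⊗ₜ[F] k := by
  classical
  choose c hc using fun i => (Algebra.IsCentral.mem_center_iff F).1 (h i)
  refine ⟨∑ i ∈ ((basis Δ b).repr t).support, c i • b i, ?_⟩
  conv_lhs => rw [← (basis Δ b).linearCombination_repr t, Finsupp.linearCombination_apply]
  rw [TensorProduct.tmul_sum, Finsupp.sum]
  refine Finset.sum_congr rfl fun i _ => ?_
  rw [hc i, basis_apply, algebraMap_smul, TensorProduct.tmul_smul]

namespace TwoSidedIdeal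

open Algebra.TensorProduct

theorem smul_mem_tensorProduct (I : TwoSidedIdeal (Δ ⊗[F] K)) (d : Δ) {t : Δ ⊗[F] K}
    (ht : t ∈ I) : d • t ∈ I := by
  rw [← tmul_one_smul (F := F) (K := K), smul_eq_mul]
  exact I.mul_mem_left _ _ ht

theorem exists_one_tmul_mem [Algebra.IsCentral F Δ] (I : TwoSidedIdeal (Δ ⊗[F] K))
    {t : Δ ⊗[F] K} (ht : t ∈ I) (ht0 : t ≠ 0) : ∃ k : K, k ≠ 0 ∧ (1 : Δ) ⊗ₜ[F] k ∈ I := by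
  classical
  set B := basis Δ (Basis.ofVectorSpace F K) with hB
  induction hn : (B.repr t).support.card using Nat.strong_induction_on generalizing t with
  | _ n ih =>
  obtain ⟨i₀, hi₀⟩ := Finsupp.support_nonempty_iff.2 (B.repr.map_ne_zero_iff.2 ht0)
  have hc : B.repr t i₀ ≠ 0 := Finsupp.mem_support_iff.1 hi₀
  set t' := (B.repr t i₀)⁻¹ • t
  have ht' : t' ∈ I := I.smul_mem_tensorProduct _ ht
  have ht'0 : t' ≠ 0 := smul_ne_zero (inv_ne_zero hc) ht0
  have hsupp : (B.repr t').support = (B.repr t).support := by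
    rw [map_smul]
    exact Finsupp.support_smul_eq (inv_ne_zero hc)
  have hone : B.repr t' i₀ = 1 := by
    rw [map_smul, Finsupp.smul_apply, smul_eq_mul, inv_mul_cancel₀ hc]
  by_cases hcomm : ∀ d : Δ, d • t' - t' * (d ⊗ₜ[F] (1 : K)) = 0
  · have hcenter : ∀ i, B.repr t' i ∈ Subalgebra.center F Δ := fun i =>
      Subalgebra.mem_center_iff.2 fun d => by
        have := congr(B.repr $(hcomm d) i)
        rwa [basis_repr_smul_sub_mul_tmul_one, ← hB, map_zero, Finsupp.zero_apply,
          sub_eq_zero] at this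
    obtain ⟨k, hk⟩ := exists_eq_one_tmul_of_basis_repr_mem_center _ t' hcenter
    exact ⟨k, fun hk0 => ht'0 (by rw [hk, hk0, TensorProduct.tmul_zero]), hk ▸ ht'⟩
  · push Not at hcomm
    obtain ⟨d, hd⟩ := hcomm
    refine ih _ ?_ (I.sub_mem (I.smul_mem_tensorProduct d ht') (I.mul_mem_right _ _ ht')) hd rfl
    rw [← hn, ← hsupp]
    refine (Finset.card_le_card fun i hi => ?_).trans_lt
      (Finset.card_erase_lt_of_mem (hsupp ▸ hi₀))
    rw [Finsupp.mem_support_iff, basis_repr_smul_sub_mul_tmul_one, ← hB] at hi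
    rw [Finset.mem_erase, Finsupp.mem_support_iff]
    exact ⟨by rintro rfl; simp [hone] at hi, by rintro h0; simp [h0] at hi⟩

end TwoSidedIdeal

theorem isSimpleRing_tensorProduct [Algebra.IsCentral F Δ] : IsSimpleRing (Δ ⊗[F] K) := by
  refine .of_eq_bot_or_eq_top fun I => or_iff_not_imp_left.2 fun hI => ?_
  obtain ⟨t, ht, ht0⟩ : ∃ t ∈ I, t ≠ 0 := by
    by_contra! h
    exact hI (eq_bot_iff.2 fun t ht => (TwoSidedIdeal.mem_bot _).2 (h t ht))
  obtain ⟨k, hk0, hk⟩ := I.exists_one_tmul_mem ht ht0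
  rw [← I.one_mem_iff, Algebra.TensorProduct.one_def, ← inv_mul_cancel₀ hk0, ← one_mul (1 : Δ),
    ← Algebra.TensorProduct.tmul_mul_tmul]
  exact I.mul_mem_left _ _ hk

instance [FiniteDimensional F K] : Module.Finite Δ (Δ ⊗[F] K) :=
  .of_basis (Algebra.TensorProduct.basis Δ (Module.finBasis F K))

theorem finrank_tensorProduct [FiniteDimensional F K] : finrank Δ (Δ ⊗[F] K) = finrank F K := by
  rw [finrank_eq_card_basis (Algebra.TensorProduct.basis Δ (Module.finBasis F K)),
    Fintype.card_fin]

theorem exists_leftIdeal_finrank_eq_one [FiniteDimensional F K] [IsSimpleRing (Δ ⊗[F] K)]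
    (hq : (finrank F K).Prime) (hnd : ¬ ∀ t : Δ ⊗[F] K, t ≠ 0 → IsUnit t) :
    ∃ S : Submodule (Δ ⊗[F] K) (Δ ⊗[F] K), finrank Δ S = 1 := by
  have : IsArtinianRing (Δ ⊗[F] K) := .of_finite Δ _
  obtain ⟨n, -, S, _, ⟨e⟩⟩ := (IsSimpleRing.isIsotypic (Δ ⊗[F] K) (Δ ⊗[F] K)).linearEquiv_fun
  have : Module.Finite Δ S := .of_injective (S.subtype.restrictScalars Δ) Subtype.val_injective
  have hdim : finrank F K = n * finrank Δ S := by
    rw [← finrank_tensorProduct (Δ := Δ), (e.restrictScalars Δ).finrank_eq, finrank_pi_fintype,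
      Finset.sum_const, Finset.card_univ, Fintype.card_fin, smul_eq_mul]
  rcases Nat.prime_mul_iff.1 (hdim ▸ hq) with ⟨-, h⟩ | ⟨-, rfl⟩
  · exact ⟨S, h⟩
  · have : IsSimpleModule (Δ ⊗[F] K) (Δ ⊗[F] K) :=
      .congr (e.trans (LinearEquiv.funUnique (Fin 1) _ S))
    exact (hnd (isSimpleModule_self_iff_isUnit.1 this).2).elim

end

theorem stmt16_general {F : Type*} [Field F] {Δ : Type*} [DivisionRing Δ] [Algebra F Δ]
    (hcent : ∀ z : Δ, z ∈ Subring.center Δ ↔ ∃ c : F, z = algebraMap F Δ c)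
    {K : Type*} [Field K] [Algebra F K] [FiniteDimensional F K]
    (hq : (Module.finrank F K).Prime)
    (μ : Polynomial F)
    (hθ : ∃ θ : K, Polynomial.aeval θ μ = 0)
    (hnd : ¬ ∀ t : Δ ⊗[F] K, t ≠ 0 → IsUnit t) :
    (∃ f : K →ₐ[F] Δ, Function.Injective f) ∧ ∃ δ : Δ, Polynomial.aeval δ μ = 0 := by
  have : Algebra.IsCentral F Δ := ⟨fun z hz => by
    obtain ⟨c, rfl⟩ := (hcent z).1 (Subring.mem_center_iff.2 (Subalgebra.mem_center_iff.1 hz))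
    exact Algebra.mem_bot.2 ⟨c, rfl⟩⟩
  have : IsSimpleRing (Δ ⊗[F] K) := isSimpleRing_tensorProduct
  obtain ⟨S, hS⟩ := exists_leftIdeal_finrank_eq_one hq hnd
  obtain ⟨f⟩ := nonempty_algHom_of_finrank_eq_one (F := F) (K := K) hS
  obtain ⟨θ, hθ⟩ := hθ
  exact ⟨⟨f, f.injective⟩, f θ, by rw [Polynomial.aeval_algHom_apply, hθ, map_zero]⟩

/-- If `Δ` is a finite-dimensional division algebra with center `F` and
`K = F[s]/μ(s)F[s]` is a field extension of prime degree (`μ` irreducible over `F`,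
with root `θ` generating `K`), and `Δ ⊗_F K` is not a division ring, then `K` embeds as
a subfield of `Δ`; in particular `μ(s)` has a root in `Δ`. -/
theorem stmt16 {F : Type*} [Field F] {Δ : Type*} [DivisionRing Δ] [Algebra F Δ]
    [FiniteDimensional F Δ]
    (hcent : ∀ z : Δ, z ∈ Subring.center Δ ↔ ∃ c : F, z = algebraMap F Δ c)
    {K : Type*} [Field K] [Algebra F K] [FiniteDimensional F K]
    (hq : (Module.finrank F K).Prime)
    (μ : Polynomial F) (hirr : Irreducible μ) (hdeg : μ.natDegree = Module.finrank F K)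
    (hθ : ∃ θ : K, Polynomial.aeval θ μ = 0)
    (hnd : ¬ ∀ t : Δ ⊗[F] K, t ≠ 0 → IsUnit t) :
    (∃ f : K →ₐ[F] Δ, Function.Injective f) ∧ ∃ δ : Δ, Polynomial.aeval δ μ = 0 :=
  stmt16_general hcent hq μ hθ hnd
end
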